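/- arXiv:0807.3939 — 13 statements merged into one kernel-verified Lean document; each statement's English description precedes it below -/
import Mathlib

section
/- Let x_1,...,x_k be real points outside the interval [-1,1], and let P̃ be the subspace of real polynomials p satisfying, for each i, a fixed nontrivial linear condition of the form sum_{j=0}^{r_i} a_{ij} p^{(j)}(x_i) = 0. Then P̃ is dense in C[-1,1] with respect to the supremum norm. -/
/-!
Multiplying by `m = ∏ i, (X - x i) ^ (r i + 1)` sends every polynomial into the subspace, since
all derivatives of order `≤ r i` of a multiple of `m` vanish at `x i`. As `m` has no zero on
`[-1, 1]`, it is a unit of `C([-1, 1], ℝ)`, so multiplication by `m` is a surjective continuous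
map and carries the polynomials, dense by Weierstrass, onto a dense set.
-/

open Polynomial

theorem Polynomial.eval_iterate_derivative_eq_zero_of_pow_dvd {R : Type*} [CommRing R]
    {p : R[X]} {t : R} {n j : ℕ} (h : (X - C t) ^ n ∣ p) (hj : j < n) :
    (derivative^[j] p).eval t = 0 :=
  dvd_iff_isRoot.mp <| (dvd_pow_self _ (Nat.sub_ne_zero_of_lt hj)).trans
    (pow_sub_dvd_iterate_derivative_of_pow_dvd j h)

theorem dense_polynomialFunctions_Icc (a b : ℝ) :
    Dense (polynomialFunctions (Set.Icc a b) : Set C(Set.Icc a b, ℝ)) := by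
  rw [dense_iff_closure_eq, ← Subalgebra.topologicalClosure_coe,
    polynomialFunctions_closure_eq_top, Algebra.coe_top]

theorem IsUnit.dense_image_mul_left {M : Type*} [Monoid M] [TopologicalSpace M]
    [ContinuousMul M] {u : M} (hu : IsUnit u) {s : Set M} (hs : Dense s) :
    Dense ((u * ·) '' s) :=
  (isUnit_iff_mulLeft_bijective.mp hu).surjective.denseRange.dense_image
    (continuous_const_mul u) hs

theorem stmt_0_general (k : ℕ) (x : Fin k → ℝ) (hx : ∀ i, x i ∉ Set.Icc (-1 : ℝ) 1)
    (r : Fin k → ℕ) (a : (i : Fin k) → Fin (r i + 1) → ℝ) :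
    Dense {f : C(Set.Icc (-1 : ℝ) 1, ℝ) |
      ∃ p : Polynomial ℝ,
        (∀ i, ∑ j : Fin (r i + 1),
            a i j * ((fun q => Polynomial.derivative q)^[(j : ℕ)] p).eval (x i) = 0) ∧
        ∀ t : Set.Icc (-1 : ℝ) 1, f t = p.eval (t : ℝ)} := by
  set m : ℝ[X] := ∏ i, (X - C (x i)) ^ (r i + 1)
  have hm : IsUnit (m.toContinuousMapOn (Set.Icc (-1) 1)) := by
    rw [ContinuousMap.isUnit_iff_forall_ne_zero]
    rintro ⟨t, ht⟩
    simp only [toContinuousMapOn_apply, toContinuousMap_apply, m, eval_prod, eval_pow, eval_sub,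
      eval_X, eval_C]
    exact Finset.prod_ne_zero_iff.mpr fun i _ ↦ pow_ne_zero _ <| sub_ne_zero.mpr
      fun h ↦ hx i (h ▸ ht)
  refine (hm.dense_image_mul_left (dense_polynomialFunctions_Icc _ _)).mono ?_
  rintro _ ⟨_, ⟨s, -, rfl⟩, rfl⟩
  refine ⟨m * s, fun i ↦ Finset.sum_eq_zero fun j _ ↦ ?_, fun t ↦ by simp⟩
  have hdvd : (X - C (x i)) ^ (r i + 1) ∣ m * s :=
    dvd_mul_of_dvd_left (Finset.dvd_prod_of_mem _ (Finset.mem_univ i)) s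
  rw [eval_iterate_derivative_eq_zero_of_pow_dvd hdvd j.2, mul_zero]

/-- Let x_1,...,x_k be real points outside [-1,1], and let P̃ be the
subspace of real polynomials satisfying, for each i, a fixed nontrivial linear
condition ∑_{j=0}^{r_i} a_{ij} p^{(j)}(x_i) = 0.  Then P̃ is dense in C[-1,1]
with the supremum norm. -/
theorem stmt_0 (k : ℕ) (x : Fin k → ℝ) (hx : ∀ i, x i ∉ Set.Icc (-1 : ℝ) 1)
    (r : Fin k → ℕ) (a : (i : Fin k) → Fin (r i + 1) → ℝ)
    (ha : ∀ i, ∃ j, a i j ≠ 0) :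
    Dense {f : C(Set.Icc (-1 : ℝ) 1, ℝ) |
      ∃ p : Polynomial ℝ,
        (∀ i, ∑ j : Fin (r i + 1),
            a i j * ((fun q => Polynomial.derivative q)^[(j : ℕ)] p).eval (x i) = 0) ∧
        ∀ t : Set.Icc (-1 : ℝ) 1, f t = p.eval (t : ℝ)} :=
  stmt_0_general k x hx r a
end

section
/- For real b with |b|>1 and real a, the space E^{a,b} = {p polynomial : p'(b) + a·p(b) = 0} is dense in L^2([-1,1], W dx) where W(x) = (1-x)^α (1+x)^β/(x-b)^2 with α, β > -1. -/
open MeasureTheory Polynomial Set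
open scoped ENNReal

/-!
Bounded continuous functions are dense in `L²(W dx)` because `W` is integrable: near `±1` it is
an integrable power times a continuous factor, as `b ∉ [-1, 1]`. By Weierstrass they are uniform
limits of polynomials on `[-1, 1]`, so it suffices to approximate a polynomial `p` uniformly by
polynomials in the kernel of `L q = q'(b) + a q(b)`. Since `|b| > 1`, `L` is unbounded for the
sup norm on `[-1, 1]`: `L (X ^ (n + 1)) = b ^ n (n + 1 + a b)` while `|x ^ (n + 1)| ≤ 1`. Hence
`p - (L p / L r) • r` with `|L r|` large lies in the kernel and is uniformly close to `p`.
-/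

theorem integrableOn_one_sub_rpow_mul_one_add_rpow_div_sq {α β b : ℝ} (hα : -1 < α)
    (hβ : -1 < β) (hb : b ∉ Icc (-1) 1) :
    IntegrableOn (fun x : ℝ => (1 - x) ^ α * (1 + x) ^ β / (x - b) ^ 2) (Ioo (-1) 1) := by
  have hxb : ∀ x ∈ Icc (-1 : ℝ) 1, (x - b) ^ 2 ≠ 0 := fun x hx h =>
    hb (sub_eq_zero.1 (pow_eq_zero_iff two_ne_zero |>.1 h) ▸ hx)
  have lower : IntervalIntegrable (fun x : ℝ => (1 - x) ^ α * (1 + x) ^ β / (x - b) ^ 2)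
      volume (-1) 0 := by
    have h := (intervalIntegral.intervalIntegrable_rpow' hβ (a := 0) (b := 1)).comp_add_right 1
    norm_num at h
    convert h.continuousOn_mul (g := fun x => (1 - x) ^ α / (x - b) ^ 2) ?_ using 2 with x
    · rw [add_comm x]; ring
    · rw [uIcc_of_le (by norm_num)]
      refine ContinuousOn.div (ContinuousOn.rpow_const (by fun_prop) fun x hx => ?_)
        (by fun_prop) fun x hx => hxb x ⟨hx.1, hx.2.trans zero_le_one⟩
      left; linarith [hx.2]
  have upper : IntervalIntegrable (fun x : ℝ => (1 - x) ^ α * (1 + x) ^ β / (x - b) ^ 2)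
      volume 0 1 := by
    have h :=
      ((intervalIntegral.intervalIntegrable_rpow' hα (a := 0) (b := 1)).comp_sub_left 1).symm
    norm_num at h
    convert h.continuousOn_mul (g := fun x => (1 + x) ^ β / (x - b) ^ 2) ?_ using 2 with x
    · ring
    · rw [uIcc_of_le (by norm_num)]
      refine ContinuousOn.div (ContinuousOn.rpow_const (by fun_prop) fun x hx => ?_)
        (by fun_prop) fun x hx => hxb x ⟨by linarith [hx.1], hx.2⟩
      left; linarith [hx.1]
  rw [← intervalIntegrable_iff_integrableOn_Ioo_of_le (by norm_num)]
  exact lower.trans upper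

theorem MeasureTheory.Lp.dist_le_of_ae_eq_of_ae_bound {α E : Type*} [MeasurableSpace α]
    {μ : Measure α} [IsFiniteMeasure μ] [NormedAddCommGroup E] {p : ℝ≥0∞} [Fact (1 ≤ p)]
    {F G : Lp E p μ} {f g : α → E} (hF : F =ᵐ[μ] f) (hG : G =ᵐ[μ] g) {C : ℝ} (hC : 0 ≤ C)
    (h : ∀ᵐ x ∂μ, ‖f x - g x‖ ≤ C) :
    dist F G ≤ measureUnivNNReal μ ^ p.toReal⁻¹ * C := by
  rw [dist_eq_norm_sub]
  refine Lp.norm_le_of_ae_bound hC ?_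
  filter_upwards [Lp.coeFn_sub F G, hF, hG, h] with x hFG hFx hGx hx
  rwa [hFG, Pi.sub_apply, hFx, hGx]

theorem Polynomial.memLp_eval_of_ae_mem_Icc {μ : Measure ℝ} [IsFiniteMeasure μ] {p : ℝ≥0∞}
    {u v : ℝ} (hμ : ∀ᵐ x ∂μ, x ∈ Icc u v) (q : ℝ[X]) : MemLp (fun x => q.eval x) p μ := by
  obtain ⟨C, hC⟩ := isCompact_Icc.exists_bound_of_continuousOn q.continuous.continuousOn
  exact MemLp.of_bound q.continuous.aestronglyMeasurable C (hμ.mono hC)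

theorem dense_setOf_ae_eq_eval {μ : Measure ℝ} [IsFiniteMeasure μ] {p : ℝ≥0∞} [Fact (1 ≤ p)]
    (hp : p ≠ ∞) {u v : ℝ} (hμ : ∀ᵐ x ∂μ, x ∈ Icc u v) {S : Set ℝ[X]}
    (hS : ∀ q : ℝ[X], ∀ δ > 0, ∃ q' ∈ S, ∀ x ∈ Icc u v, |q.eval x - q'.eval x| ≤ δ) :
    Dense {f : Lp ℝ p μ | ∃ q ∈ S, ∀ᵐ x ∂μ, f x = q.eval x} := by
  refine dense_closure.1 <| (BoundedContinuousFunction.toLp_denseRange ℝ μ ℝ hp).mono ?_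
  rintro _ ⟨g, rfl⟩
  rw [Metric.mem_closure_iff]
  intro ε hε
  set K : ℝ := measureUnivNNReal μ ^ p.toReal⁻¹
  have hK : 0 ≤ K := by positivity
  set δ := ε / (K + 1) / 2
  have hδ : 0 < δ := by positivity
  obtain ⟨q₀, hq₀⟩ :=
    exists_polynomial_near_of_continuousOn u v g g.continuous.continuousOn δ hδ
  obtain ⟨q, hqS, hq⟩ := hS q₀ δ hδ
  have hmem := memLp_eval_of_ae_mem_Icc (p := p) hμ q
  refine ⟨hmem.toLp _, ⟨q, hqS, hmem.coeFn_toLp⟩, ?_⟩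
  calc dist _ _ ≤ K * (2 * δ) := by
        refine Lp.dist_le_of_ae_eq_of_ae_bound (BoundedContinuousFunction.coeFn_toLp p μ ℝ g)
          hmem.coeFn_toLp (by positivity) (hμ.mono fun x hx => ?_)
        rw [Real.norm_eq_abs, two_mul]
        calc |g x - q.eval x| ≤ |g x - q₀.eval x| + |q₀.eval x - q.eval x| :=
              abs_sub_le _ _ _
          _ ≤ δ + δ := by
            gcongr
            · exact (abs_sub_comm (g x) _ ▸ hq₀ x hx).le
            · exact hq x hx
    _ < ε := by
        rw [show K * (2 * δ) = ε * (K / (K + 1)) by simp only [δ]; field_simp]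
        exact mul_lt_of_lt_one_right hε ((div_lt_one (by positivity)).2 (lt_add_one K))

theorem exists_mem_ker_near {s : Set ℝ} (L : ℝ[X] →ₗ[ℝ] ℝ)
    (hL : ∀ M : ℝ, ∃ r : ℝ[X], (∀ x ∈ s, |r.eval x| ≤ 1) ∧ M ≤ |L r|)
    (p : ℝ[X]) {δ : ℝ} (hδ : 0 < δ) :
    ∃ q : ℝ[X], L q = 0 ∧ ∀ x ∈ s, |p.eval x - q.eval x| ≤ δ := by
  obtain ⟨r, hr, hLr⟩ := hL (|L p| / δ + 1)
  have hLr0 : 0 < |L r| := lt_of_lt_of_le (by positivity) hLr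
  refine ⟨p - (L p / L r) • r, ?_, fun x hx => ?_⟩
  · rw [map_sub, map_smul, smul_eq_mul, div_mul_cancel₀ _ (abs_pos.1 hLr0), sub_self]
  · rw [eval_sub, eval_smul, sub_sub_cancel, smul_eq_mul, abs_mul, abs_div]
    calc |L p| / |L r| * |r.eval x| ≤ |L p| / |L r| :=
          mul_le_of_le_one_right (by positivity) (hr x hx)
      _ ≤ δ := by
        rw [div_le_iff₀ hLr0, ← div_le_iff₀' hδ]
        linarith

noncomputable def derivEvalAddMulEval (a b : ℝ) : ℝ[X] →ₗ[ℝ] ℝ :=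
  (leval b).comp derivative + a • leval b

@[simp]
theorem derivEvalAddMulEval_apply (a b : ℝ) (p : ℝ[X]) :
    derivEvalAddMulEval a b p = (derivative p).eval b + a * p.eval b := rfl

theorem exists_le_abs_derivEvalAddMulEval (a : ℝ) {b : ℝ} (hb : 1 < |b|) (M : ℝ) :
    ∃ r : ℝ[X], (∀ x ∈ Icc (-1 : ℝ) 1, |r.eval x| ≤ 1) ∧ M ≤ |derivEvalAddMulEval a b r| := by
  obtain ⟨n, hn⟩ := exists_nat_ge (M + |a * b|)
  refine ⟨X ^ (n + 1), fun x hx => ?_, ?_⟩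
  · rw [eval_pow, eval_X, abs_pow]
    exact pow_le_one₀ (abs_nonneg x) (abs_le.2 hx)
  · have hL : derivEvalAddMulEval a b (X ^ (n + 1)) = b ^ n * (n + 1 + a * b) := by
      simp only [derivEvalAddMulEval_apply, derivative_X_pow_succ, eval_mul, eval_pow, eval_X,
        eval_C]
      ring
    calc M ≤ n + 1 - |a * b| := by linarith
      _ ≤ |n + 1 + a * b| := by
        linarith [neg_abs_le (a * b), le_abs_self (n + 1 + a * b : ℝ)]
      _ ≤ |b| ^ n * |n + 1 + a * b| := le_mul_of_one_le_left (abs_nonneg _) (one_le_pow₀ hb.le)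
      _ = |derivEvalAddMulEval a b (X ^ (n + 1))| := by rw [hL, abs_mul, abs_pow]

theorem stmt_1_general (α β a b : ℝ) (hα : -1 < α) (hβ : -1 < β) (hb : 1 < |b|) :
    Dense {f : Lp ℝ 2
        ((volume.restrict (Set.Ioo (-1 : ℝ) 1)).withDensity
          (fun x => ENNReal.ofReal ((1 - x) ^ α * (1 + x) ^ β / (x - b) ^ 2))) |
      ∃ p : Polynomial ℝ,
        (Polynomial.derivative p).eval b + a * p.eval b = 0 ∧
        ∀ᵐ x ∂((volume.restrict (Set.Ioo (-1 : ℝ) 1)).withDensity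
          (fun x => ENNReal.ofReal ((1 - x) ^ α * (1 + x) ^ β / (x - b) ^ 2))),
          f x = p.eval x} := by
  have hb' : b ∉ Icc (-1 : ℝ) 1 := fun h => hb.not_ge (abs_le.2 h)
  set μ := (volume.restrict (Ioo (-1 : ℝ) 1)).withDensity
    fun x => ENNReal.ofReal ((1 - x) ^ α * (1 + x) ^ β / (x - b) ^ 2)
  have : IsFiniteMeasure μ := isFiniteMeasure_withDensity_ofReal
    (integrableOn_one_sub_rpow_mul_one_add_rpow_div_sq hα hβ hb').hasFiniteIntegral
  have hμ : ∀ᵐ x ∂μ, x ∈ Icc (-1 : ℝ) 1 := (withDensity_absolutelyContinuous _ _).ae_le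
    ((ae_restrict_mem measurableSet_Ioo).mono fun _ hx => Ioo_subset_Icc_self hx)
  exact dense_setOf_ae_eq_eval ENNReal.ofNat_ne_top hμ
    (S := {q | derivEvalAddMulEval a b q = 0})
    fun q _ hδ => exists_mem_ker_near _ (exists_le_abs_derivEvalAddMulEval a hb) q hδ

/-- For real b with |b|>1 (with a = (β-α)/2, b = (β+α)/(β-α)),
the space E^{a,b} = {p : p'(b) + a p(b) = 0} is dense in
L²([-1,1], W dx) where W(x) = (1-x)^α (1+x)^β / (x-b)², α,β > -1. -/
theorem stmt_1 (α β a b : ℝ) (hα : -1 < α) (hβ : -1 < β) (hne : α ≠ β)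
    (hab : a = (β - α) / 2) (hbb : b = (β + α) / (β - α)) (hb : 1 < |b|) :
    Dense {f : Lp ℝ 2
        ((volume.restrict (Set.Ioo (-1 : ℝ) 1)).withDensity
          (fun x => ENNReal.ofReal ((1 - x) ^ α * (1 + x) ^ β / (x - b) ^ 2))) |
      ∃ p : Polynomial ℝ,
        (Polynomial.derivative p).eval b + a * p.eval b = 0 ∧
        ∀ᵐ x ∂((volume.restrict (Set.Ioo (-1 : ℝ) 1)).withDensity
          (fun x => ENNReal.ofReal ((1 - x) ^ α * (1 + x) ^ β / (x - b) ^ 2))),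
          f x = p.eval x} :=
  stmt_1_general α β a b hα hβ hb
end

section
/- For k > 0, the space of real polynomials p with p(-k) = 0 is dense in the Hilbert space L^2([0,∞), x^k e^{-x} dx). -/
/-!
Let `μ` be a measure on `[0, ∞)` with `∫ exp (ε x) dμ < ∞` (for `x ^ k * exp (-x) dx` take
`ε = 1 / 2`), let `a < 0`, and put `E x = exp (-t (x - a))` for a small `t > 0`. The Taylor
polynomials of `E` at `a` take the value `1` at `a` and converge to `E` in `L²(μ)`, even after
multiplication by a polynomial; by induction on `m`, `q E ^ m - q(a)` therefore lies in the closure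
`W` of the polynomials vanishing at `a`. On `[0, ∞)` we have `E ≤ exp (t a) < 1`, so `E ^ m → 0`
in `L²(μ)` and `W` contains the constant `1`, hence every `q E ^ m`. For `t = 1 / n`, `exp (-x)` is
a multiple of `E ^ n`, so `W` contains every `r (exp (-x))`. By Weierstrass in the variable
`exp (-x) ∈ (0, 1]` these approximate any compactly supported continuous function uniformly on
`[0, ∞)`, and such functions are dense in `L²(μ)`.
-/

open MeasureTheory Polynomial
open Real Filter Set Topology Finset
open scoped ENNReal Nat

namespace Submodule

variable {α E 𝕜 : Type*} {m : MeasurableSpace α} {p : ℝ≥0∞} {μ : Measure α}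
  [NormedAddCommGroup E] [NormedRing 𝕜] [Module 𝕜 E] [IsBoundedSMul 𝕜 E]

def toLpComap (W : Submodule 𝕜 (Lp E p μ)) : Submodule 𝕜 (α → E) where
  carrier := {f | ∃ hf : MemLp f p μ, hf.toLp f ∈ W}
  add_mem' := fun ⟨hf, hfW⟩ ⟨hg, hgW⟩ => ⟨hf.add hg, W.add_mem hfW hgW⟩
  zero_mem' := ⟨MemLp.zero, W.zero_mem⟩
  smul_mem' := fun c _ ⟨hf, hfW⟩ => ⟨hf.const_smul c, W.smul_mem c hfW⟩

theorem toLpComap_mem_of_tendsto [Fact (1 ≤ p)] {W : Submodule 𝕜 (Lp E p μ)}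
    (hW : IsClosed (W : Set (Lp E p μ))) {ι : Type*} {l : Filter ι} [l.NeBot] {f : ι → α → E}
    (hf : ∀ i, f i ∈ W.toLpComap) {g : α → E} (hg : MemLp g p μ)
    (hlim : Tendsto (fun i => eLpNorm (f i - g) p μ) l (𝓝 0)) : g ∈ W.toLpComap := by
  choose hfm hfW using hf
  exact ⟨hg, hW.mem_of_tendsto ((Lp.tendsto_Lp_iff_tendsto_eLpNorm'' f hfm g hg).2 hlim)
    (Eventually.of_forall hfW)⟩

end Submodule

theorem MeasureTheory.tendsto_eLpNorm_zero_of_ae_le_mul {α F G ι : Type*}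
    {m : MeasurableSpace α} {μ : Measure α} [NormedAddCommGroup F] [NormedAddCommGroup G]
    {p : ℝ≥0∞} {l : Filter ι} {f : ι → α → F} {g : α → G} {c : ι → ℝ} (hg : eLpNorm g p μ ≠ ∞)
    (hc : Tendsto c l (𝓝 0)) (hfg : ∀ i, ∀ᵐ x ∂μ, ‖f i x‖ ≤ c i * ‖g x‖) :
    Tendsto (fun i => eLpNorm (f i) p μ) l (𝓝 0) := by
  have hc' : Tendsto (fun i => ENNReal.ofReal (c i) * eLpNorm g p μ) l (𝓝 0) := by
    simpa using ENNReal.Tendsto.mul_const (ENNReal.tendsto_ofReal hc) (Or.inr hg)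
  exact tendsto_of_tendsto_of_tendsto_of_le_of_le tendsto_const_nhds hc' (fun _ => bot_le)
    fun i => eLpNorm_le_mul_eLpNorm_of_ae_le_mul (hfg i) p

theorem abs_exp_neg_sub_sum_le {u : ℝ} (hu : 0 ≤ u) (N : ℕ) :
    |exp (-u) - ∑ n ∈ range N, (-u) ^ n / n !| ≤ u ^ N / N ! := by
  induction N generalizing u with
  | zero => simpa [abs_of_pos (exp_pos _)] using hu
  | succ N ih =>
    let R (M : ℕ) (v : ℝ) : ℝ := exp (-v) - ∑ n ∈ range M, (-v) ^ n / (n ! : ℝ)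
    have hterm (n : ℕ) (v : ℝ) :
        HasDerivAt (fun v : ℝ => (-v) ^ (n + 1) / (n + 1)!) (-((-v) ^ n / n !)) v := by
      refine (((hasDerivAt_neg v).pow (n + 1)).div_const ((n + 1)! : ℝ)).congr_deriv ?_
      rw [Nat.factorial_succ]
      push_cast
      field_simp
    have hderiv (v : ℝ) : HasDerivAt (R (N + 1)) (-R N v) v := by
      have hshift : R (N + 1) =
          fun w => exp (-w) - (1 + ∑ n ∈ range N, (-w) ^ (n + 1) / ((n + 1)! : ℝ)) := by
        ext w
        simp [R, sum_range_succ', add_comm]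
      rw [hshift]
      refine ((hasDerivAt_neg v).exp.sub
        ((HasDerivAt.fun_sum (u := range N) fun n _ => hterm n v).const_add 1)).congr_deriv ?_
      simp [R, sum_neg_distrib]
      ring
    have hint : R (N + 1) u = -∫ v in (0)..u, R N v := by
      rw [← intervalIntegral.integral_neg, intervalIntegral.integral_eq_sub_of_hasDerivAt
        (fun v _ => hderiv v) (Continuous.intervalIntegrable (by fun_prop) _ _)]
      simp [R, sum_range_succ']
    calc |R (N + 1) u| = ‖∫ v in (0)..u, R N v‖ := by rw [hint, abs_neg, Real.norm_eq_abs]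
      _ ≤ ∫ v in (0)..u, v ^ N / N ! :=
        intervalIntegral.norm_integral_le_of_norm_le hu
          (Eventually.of_forall fun v hv => ih hv.1.le)
          (Continuous.intervalIntegrable (by fun_prop) _ _)
      _ = u ^ (N + 1) / (N + 1)! := by
        rw [intervalIntegral.integral_div, integral_pow, Nat.factorial_succ]
        push_cast
        field_simp
        ring

theorem abs_exp_neg_sub_sum_le_exp {u : ℝ} (hu : 0 ≤ u) (N : ℕ) :
    |exp (-u) - ∑ n ∈ range N, (-u) ^ n / n !| ≤ exp (2 * u) / 2 ^ N := by
  refine (abs_exp_neg_sub_sum_le hu N).trans ?_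
  have := pow_div_factorial_le_exp (2 * u) (by positivity) N
  rw [mul_pow, mul_div_assoc] at this
  rw [le_div_iff₀ (by positivity)]
  linarith

theorem Polynomial.exists_abs_eval_le_mul_exp (q : ℝ[X]) {δ : ℝ} (hδ : 0 < δ) :
    ∃ C, 0 ≤ C ∧ ∀ x, 0 ≤ x → |q.eval x| ≤ C * exp (δ * x) := by
  refine ⟨∑ i ∈ range (q.natDegree + 1), |q.coeff i| * (i ! / δ ^ i), by positivity,
    fun x hx => ?_⟩
  rw [eval_eq_sum_range, sum_mul]
  refine (abs_sum_le_sum_abs _ _).trans (sum_le_sum fun i _ => ?_)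
  rw [abs_mul, abs_pow, abs_of_nonneg hx, mul_assoc]
  gcongr
  have := pow_div_factorial_le_exp (δ * x) (by positivity) i
  rw [mul_pow, div_le_iff₀ (by positivity)] at this
  rw [div_mul_eq_mul_div, le_div_iff₀ (by positivity)]
  linarith

theorem Continuous.exists_polynomial_near_comp_exp_neg {f : ℝ → ℝ} (hf : Continuous f)
    (hfc : HasCompactSupport f) {δ : ℝ} (hδ : 0 < δ) :
    ∃ r : ℝ[X], ∀ x, 0 ≤ x → |f x - r.eval (exp (-x))| < δ := by
  classical
  let g := Function.update (fun u => f (-Real.log u)) 0 0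
  have hg : ContinuousOn g (Icc 0 1) := by
    refine continuousOn_update_iff.2 ⟨?_, fun _ => ?_⟩
    · exact hf.comp_continuousOn (Real.continuousOn_log.neg.mono fun u hu => hu.2)
    · refine ((hfc.is_zero_at_infty.mono_left atTop_le_cocompact).comp
        (tendsto_neg_atBot_atTop.comp tendsto_log_nhdsGT_zero)).mono_left (nhdsWithin_mono _ ?_)
      rintro u ⟨hu, hu0⟩
      exact lt_of_le_of_ne hu.1 (Ne.symm hu0)
  obtain ⟨r, hr⟩ := exists_polynomial_near_of_continuousOn 0 1 g hg δ hδ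
  refine ⟨r, fun x hx => ?_⟩
  have hgx : g (exp (-x)) = f x := by simp [g, (exp_pos _).ne']
  have := hr (exp (-x)) ⟨(exp_pos _).le, exp_le_one_iff.2 (by linarith)⟩
  rwa [hgx, abs_sub_comm] at this

noncomputable def expTaylor (t a : ℝ) (N : ℕ) : ℝ[X] :=
  ∑ n ∈ range (N + 1), C ((n ! : ℝ)⁻¹) * (-(C t * (X - C a))) ^ n

theorem eval_expTaylor (t a x : ℝ) (N : ℕ) :
    (expTaylor t a N).eval x = ∑ n ∈ range (N + 1), (-(t * (x - a))) ^ n / n ! := by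
  simp [expTaylor, eval_finsetSum, div_eq_inv_mul]

theorem eval_expTaylor_self (t a : ℝ) (N : ℕ) : (expTaylor t a N).eval a = 1 := by
  simp [eval_expTaylor, sum_range_succ']

/- The error factor is at most `exp (2 t (x - a)) / 2 ^ (N + 1)` and `q` grows at most like
`exp (ε x / 4)`; the condition `8 t ≤ ε` keeps their product below `exp (ε x / 2)`. -/
theorem exists_abs_eval_mul_expTaylor_sub_le (q : ℝ[X]) {ε t a : ℝ} (hε : 0 < ε) (ha : a ≤ 0)
    (ht : 0 ≤ t) (htε : 8 * t ≤ ε) :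
    ∃ K, ∀ N : ℕ, ∀ x, 0 ≤ x →
      |q.eval x * ((expTaylor t a N).eval x - exp (-(t * (x - a))))| ≤
        K / 2 ^ N * exp (ε / 2 * x) := by
  obtain ⟨C, hC0, hC⟩ := q.exists_abs_eval_le_mul_exp (δ := ε / 4) (by positivity)
  refine ⟨C * exp (-(2 * t * a)), fun N x hx => ?_⟩
  have hu : 0 ≤ t * (x - a) := mul_nonneg ht (by linarith)
  have hexp : exp (ε / 4 * x) * exp (2 * (t * (x - a))) ≤
      exp (-(2 * t * a)) * exp (ε / 2 * x) := by
    rw [← exp_add, ← exp_add, exp_le_exp]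
    nlinarith
  rw [abs_mul, eval_expTaylor, abs_sub_comm]
  calc |q.eval x| * |exp (-(t * (x - a))) - ∑ n ∈ range (N + 1), (-(t * (x - a))) ^ n / n !|
      ≤ (C * exp (ε / 4 * x)) * (exp (2 * (t * (x - a))) / 2 ^ (N + 1)) :=
        mul_le_mul (hC x hx) (abs_exp_neg_sub_sum_le_exp hu (N + 1)) (abs_nonneg _)
          (by positivity)
    _ = C * (exp (ε / 4 * x) * exp (2 * (t * (x - a)))) / 2 ^ (N + 1) := by ring
    _ ≤ C * (exp (-(2 * t * a)) * exp (ε / 2 * x)) / 2 ^ N := by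
      gcongr
      · norm_num
      · omega
    _ = C * exp (-(2 * t * a)) / 2 ^ N * exp (ε / 2 * x) := by ring

theorem exp_neg_mul_sub_pow_le {t a x : ℝ} (ht : 0 ≤ t) (hx : 0 ≤ x) (m : ℕ) :
    exp (-(t * (x - a))) ^ m ≤ exp (t * a) ^ m := by
  gcongr
  nlinarith

theorem exp_neg_mul_sub_pow_le_one {t a x : ℝ} (ht : 0 ≤ t) (ha : a ≤ 0) (hx : 0 ≤ x) (m : ℕ) :
    exp (-(t * (x - a))) ^ m ≤ 1 :=
  (exp_neg_mul_sub_pow_le ht hx m).trans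
    (pow_le_one₀ (exp_nonneg _) (exp_le_one_iff.2 (mul_nonpos_of_nonneg_of_nonpos ht ha)))

structure HasExpMoment (μ : Measure ℝ) (ε : ℝ) : Prop where
  ae_nonneg : ∀ᵐ x ∂μ, 0 ≤ x
  pos : 0 < ε
  integrable_exp : Integrable (fun x => exp (ε * x)) μ

noncomputable def vanishingPolyLp (μ : Measure ℝ) (a : ℝ) : Submodule ℝ (Lp ℝ 2 μ) where
  carrier := {f | ∃ p : ℝ[X], p.eval a = 0 ∧ f =ᵐ[μ] fun x => p.eval x}
  add_mem' := by
    rintro f g ⟨p, hp, hfp⟩ ⟨q, hq, hgq⟩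
    refine ⟨p + q, by simp [hp, hq], ?_⟩
    filter_upwards [Lp.coeFn_add f g, hfp, hgq] with x h1 h2 h3
    rw [eval_add, ← h2, ← h3]
    exact h1
  zero_mem' := ⟨0, eval_zero, by
    filter_upwards [Lp.coeFn_zero ℝ 2 μ] with x hx
    simpa using hx⟩
  smul_mem' := by
    rintro c f ⟨p, hp, hfp⟩
    refine ⟨C c * p, by simp [hp], ?_⟩
    filter_upwards [Lp.coeFn_smul c f, hfp] with x h1 h2
    simp [h1, h2]

noncomputable def vanishingPolyClosure (μ : Measure ℝ) (a : ℝ) : Submodule ℝ (ℝ → ℝ) :=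
  (vanishingPolyLp μ a).topologicalClosure.toLpComap

theorem vanishingPolyClosure_mem_of_tendsto {μ : Measure ℝ} {a : ℝ} {ι : Type*} {l : Filter ι}
    [l.NeBot] {f : ι → ℝ → ℝ} (hf : ∀ i, f i ∈ vanishingPolyClosure μ a) {g : ℝ → ℝ}
    (hg : MemLp g 2 μ) (hlim : Tendsto (fun i => eLpNorm (f i - g) 2 μ) l (𝓝 0)) :
    g ∈ vanishingPolyClosure μ a :=
  Submodule.toLpComap_mem_of_tendsto (Submodule.isClosed_topologicalClosure _) hf hg hlim

namespace HasExpMoment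

variable {μ : Measure ℝ} {ε a t : ℝ}

theorem isFiniteMeasure (hμ : HasExpMoment μ ε) : IsFiniteMeasure μ := by
  have h1 : Integrable (fun _ => (1 : ℝ)) μ := by
    refine hμ.integrable_exp.mono' aestronglyMeasurable_const ?_
    filter_upwards [hμ.ae_nonneg] with x hx
    simpa using one_le_exp (mul_nonneg hμ.pos.le hx)
  exact (integrable_const_iff.1 h1).resolve_left one_ne_zero

theorem memLp_exp_half_mul (hμ : HasExpMoment μ ε) : MemLp (fun x => exp (ε / 2 * x)) 2 μ := by
  refine (memLp_two_iff_integrable_sq (by fun_prop)).2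
    (hμ.integrable_exp.congr (Eventually.of_forall fun x => ?_))
  simp only
  rw [sq, ← exp_add]
  ring_nf

theorem memLp_eval (hμ : HasExpMoment μ ε) (q : ℝ[X]) : MemLp (fun x => q.eval x) 2 μ := by
  obtain ⟨C, -, hC⟩ := q.exists_abs_eval_le_mul_exp (half_pos hμ.pos)
  refine hμ.memLp_exp_half_mul.of_le_mul (c := C) q.continuous.aestronglyMeasurable ?_
  filter_upwards [hμ.ae_nonneg] with x hx
  simpa [abs_of_pos (exp_pos _)] using hC x hx

theorem memLp_eval_mul_exp_pow (hμ : HasExpMoment μ ε) (ha : a ≤ 0) (ht : 0 ≤ t) (q : ℝ[X])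
    (m : ℕ) : MemLp (fun x => q.eval x * exp (-(t * (x - a))) ^ m) 2 μ := by
  refine (hμ.memLp_eval q).of_le (by fun_prop) ?_
  filter_upwards [hμ.ae_nonneg] with x hx
  rw [norm_mul, norm_pow, Real.norm_of_nonneg (exp_nonneg _)]
  exact mul_le_of_le_one_right (norm_nonneg _) (exp_neg_mul_sub_pow_le_one ht ha hx m)

theorem eval_mem_vanishingPolyClosure (hμ : HasExpMoment μ ε) {p : ℝ[X]} (hp : p.eval a = 0) :
    (fun x => p.eval x) ∈ vanishingPolyClosure μ a :=
  ⟨hμ.memLp_eval p, Submodule.le_topologicalClosure _ ⟨p, hp, MemLp.coeFn_toLp _⟩⟩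

theorem eval_mul_exp_pow_sub_mem_vanishingPolyClosure (hμ : HasExpMoment μ ε) (ha : a ≤ 0)
    (ht : 0 ≤ t) (htε : 8 * t ≤ ε) (m : ℕ) (q : ℝ[X]) :
    (fun x => q.eval x * exp (-(t * (x - a))) ^ m - q.eval a) ∈ vanishingPolyClosure μ a := by
  induction m generalizing q with
  | zero =>
    convert hμ.eval_mem_vanishingPolyClosure (a := a) (p := q - C (q.eval a)) (by simp) using 1
    ext x
    simp
  | succ m ih =>
    have := hμ.isFiniteMeasure
    obtain ⟨K, hK⟩ := exists_abs_eval_mul_expTaylor_sub_le q hμ.pos ha ht htε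
    have hKlim : Tendsto (fun N : ℕ => K / 2 ^ N) atTop (𝓝 0) := by
      simpa [div_eq_mul_inv] using (tendsto_pow_atTop_nhds_zero_of_lt_one (by norm_num)
        (by norm_num : (2⁻¹ : ℝ) < 1)).const_mul K
    refine vanishingPolyClosure_mem_of_tendsto (fun N => ih (q * expTaylor t a N))
      ((hμ.memLp_eval_mul_exp_pow ha ht q (m + 1)).sub (memLp_const _))
      (tendsto_eLpNorm_zero_of_ae_le_mul hμ.memLp_exp_half_mul.eLpNorm_ne_top hKlim fun N => ?_)
    filter_upwards [hμ.ae_nonneg] with x hx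
    have hKx := hK N x hx
    calc _ = |q.eval x * ((expTaylor t a N).eval x - exp (-(t * (x - a))))|
          * exp (-(t * (x - a))) ^ m := by
          rw [Real.norm_eq_abs, ← abs_of_nonneg (pow_nonneg (exp_nonneg _) m), ← abs_mul]
          simp only [Pi.sub_apply, eval_mul, eval_expTaylor_self, mul_one]
          ring_nf
      _ ≤ K / 2 ^ N * exp (ε / 2 * x) * 1 :=
          mul_le_mul hKx (exp_neg_mul_sub_pow_le_one ht ha hx m) (by positivity)
            ((abs_nonneg _).trans hKx)
      _ = K / 2 ^ N * ‖exp (ε / 2 * x)‖ := by rw [mul_one, Real.norm_of_nonneg (exp_nonneg _)]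

theorem one_mem_vanishingPolyClosure (hμ : HasExpMoment μ ε) (ha : a < 0) :
    (fun _ => (1 : ℝ)) ∈ vanishingPolyClosure μ a := by
  have := hμ.isFiniteMeasure
  have ht : 0 < ε / 8 := by linarith [hμ.pos]
  have hneg : (fun _ => (-1 : ℝ)) ∈ vanishingPolyClosure μ a :=
    vanishingPolyClosure_mem_of_tendsto
      (fun m => hμ.eval_mul_exp_pow_sub_mem_vanishingPolyClosure ha.le ht.le (by linarith) m 1)
      (memLp_const _)
      (tendsto_eLpNorm_zero_of_ae_le_mul (memLp_const (1 : ℝ)).eLpNorm_ne_top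
        (tendsto_pow_atTop_nhds_zero_of_lt_one (exp_nonneg _)
          (Real.exp_lt_one_iff.2 (mul_neg_of_pos_of_neg ht ha))) fun m => ?_)
  · convert (vanishingPolyClosure μ a).neg_mem hneg using 1
    ext
    simp
  filter_upwards [hμ.ae_nonneg] with x hx
  simpa [abs_of_nonneg (pow_nonneg (exp_nonneg _) m)] using exp_neg_mul_sub_pow_le ht.le hx m

theorem eval_mul_exp_pow_mem_vanishingPolyClosure (hμ : HasExpMoment μ ε) (ha : a < 0)
    (ht : 0 ≤ t) (htε : 8 * t ≤ ε) (q : ℝ[X]) (m : ℕ) :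
    (fun x => q.eval x * exp (-(t * (x - a))) ^ m) ∈ vanishingPolyClosure μ a := by
  convert (vanishingPolyClosure μ a).add_mem
    (hμ.eval_mul_exp_pow_sub_mem_vanishingPolyClosure ha.le ht htε m q)
    ((vanishingPolyClosure μ a).smul_mem (q.eval a) (hμ.one_mem_vanishingPolyClosure ha))
    using 1
  ext x
  simp

theorem eval_exp_neg_mem_vanishingPolyClosure (hμ : HasExpMoment μ ε) (ha : a < 0) (r : ℝ[X]) :
    (fun x => r.eval (exp (-x))) ∈ vanishingPolyClosure μ a := by
  obtain ⟨n, hn0, hn⟩ : ∃ n : ℕ, 0 < n ∧ 8 / ε ≤ n :=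
    ⟨⌈8 / ε⌉₊, Nat.ceil_pos.2 (div_pos (by norm_num) hμ.pos), Nat.le_ceil _⟩
  have hn0' : (0 : ℝ) < n := by exact_mod_cast hn0
  have htε : 8 * (1 / n : ℝ) ≤ ε := by
    rw [div_le_iff₀ hμ.pos] at hn
    rw [mul_one_div, div_le_iff₀ hn0']
    linarith
  have hexp_neg (x : ℝ) : exp (-x) = exp (-a) * exp (-(1 / n * (x - a))) ^ n := by
    rw [← exp_nat_mul, ← exp_add]
    congr 1
    field_simp
    ring
  have hsum : (fun x => r.eval (exp (-x))) = ∑ i ∈ range (r.natDegree + 1),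
      fun x => (C (r.coeff i * exp (-a) ^ i)).eval x * exp (-(1 / n * (x - a))) ^ (n * i) := by
    ext x
    rw [Finset.sum_apply, eval_eq_sum_range]
    refine sum_congr rfl fun i _ => ?_
    rw [hexp_neg x, eval_C, mul_pow, pow_mul]
    ring
  rw [hsum]
  exact Submodule.sum_mem _ fun i _ =>
    hμ.eval_mul_exp_pow_mem_vanishingPolyClosure ha (by positivity) htε _ _

theorem mem_vanishingPolyClosure_of_hasCompactSupport (hμ : HasExpMoment μ ε) (ha : a < 0)
    {f : ℝ → ℝ} (hf : Continuous f) (hfc : HasCompactSupport f) :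
    f ∈ vanishingPolyClosure μ a := by
  have := hμ.isFiniteMeasure
  choose r hr using fun j : ℕ =>
    hf.exists_polynomial_near_comp_exp_neg hfc (Nat.one_div_pos_of_nat (n := j))
  refine vanishingPolyClosure_mem_of_tendsto
    (fun j => hμ.eval_exp_neg_mem_vanishingPolyClosure ha (r j))
    (hf.memLp_of_hasCompactSupport hfc)
    (tendsto_eLpNorm_zero_of_ae_le_mul (memLp_const (1 : ℝ)).eLpNorm_ne_top
      tendsto_one_div_add_atTop_nhds_zero_nat fun j => ?_)
  filter_upwards [hμ.ae_nonneg] with x hx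
  simpa [abs_sub_comm] using (hr j x hx).le

theorem mem_vanishingPolyClosure_of_memLp (hμ : HasExpMoment μ ε) (ha : a < 0) {f : ℝ → ℝ}
    (hf : MemLp f 2 μ) : f ∈ vanishingPolyClosure μ a := by
  have := hμ.isFiniteMeasure
  choose g hgc hfg hg _ using fun j : ℕ => hf.exists_hasCompactSupport_eLpNorm_sub_le
    ENNReal.ofNat_ne_top (ENNReal.inv_ne_zero.2 (ENNReal.natCast_ne_top j))
  refine vanishingPolyClosure_mem_of_tendsto
    (fun j => hμ.mem_vanishingPolyClosure_of_hasCompactSupport ha (hg j) (hgc j)) hf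
    (tendsto_of_tendsto_of_tendsto_of_le_of_le tendsto_const_nhds
      ENNReal.tendsto_inv_nat_nhds_zero (fun _ => bot_le) fun j => ?_)
  rw [eLpNorm_sub_comm]
  exact hfg j

theorem dense_vanishingPolyLp (hμ : HasExpMoment μ ε) (ha : a < 0) :
    Dense (vanishingPolyLp μ a : Set (Lp ℝ 2 μ)) := by
  rw [Submodule.dense_iff_topologicalClosure_eq_top, eq_top_iff]
  intro F _
  obtain ⟨hF, hFW⟩ := hμ.mem_vanishingPolyClosure_of_memLp ha (Lp.memLp F)
  rwa [Lp.toLp_coeFn] at hFW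

end HasExpMoment

theorem hasExpMoment_withDensity_rpow_mul_exp_neg {k : ℝ} (hk : -1 < k) :
    HasExpMoment ((volume.restrict (Ioi 0)).withDensity
      fun x => ENNReal.ofReal (x ^ k * exp (-x))) (1 / 2) where
  ae_nonneg := (withDensity_absolutelyContinuous _ _).ae_le
    (ae_restrict_of_forall_mem measurableSet_Ioi fun _ hx => le_of_lt hx)
  pos := one_half_pos
  integrable_exp := by
    rw [integrable_withDensity_iff (by fun_prop)
      (Eventually.of_forall fun _ => ENNReal.ofReal_lt_top)]
    refine (integrableOn_rpow_mul_exp_neg_mul_rpow hk one_pos one_half_pos).congr_fun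
      (fun x (hx : 0 < x) => ?_) measurableSet_Ioi
    dsimp only
    rw [ENNReal.toReal_ofReal (by positivity), rpow_one, mul_left_comm, ← exp_add]
    ring_nf

/-- For k > 0, the space of real polynomials p with p(-k) = 0 is
dense in L²([0,∞), x^k e^{-x} dx). -/
theorem stmt_2 (k : ℝ) (hk : 0 < k) :
    Dense {f : Lp ℝ 2
        ((volume.restrict (Set.Ioi (0 : ℝ))).withDensity
          (fun x => ENNReal.ofReal (x ^ k * Real.exp (-x)))) |
      ∃ p : Polynomial ℝ, p.eval (-k) = 0 ∧
        ∀ᵐ x ∂((volume.restrict (Set.Ioi (0 : ℝ))).withDensity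
          (fun x => ENNReal.ofReal (x ^ k * Real.exp (-x)))),
          f x = p.eval x} :=
  (hasExpMoment_withDensity_rpow_mul_exp_neg (by linarith)).dense_vanishingPolyLp
    (neg_lt_zero.2 hk)
end

section
/- For k > 0, the space E^{-1,-k} = span{x+k+1, (x+k)^2, (x+k)^3, ...} = {p polynomial : p'(-k) - p(-k) = 0} is dense in L^2([0,∞), Ŵ_k dx) where Ŵ_k(x) = e^{-x} x^k/(x+k)^2. -/
/-!
If `g ∈ L²(Ŵ_k)` is orthogonal to `E^{-1,-k}`, which contains `(x + k)² q` for every polynomial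
`q`, then all moments of `F = g · (x + k)²` against `Ŵ_k` vanish, and `F x^m e^{δx}` is integrable
by Cauchy–Schwarz as soon as `2δ < 1`, because `Ŵ_k` decays like `e^{-x}`. Expanding `e^{-δx}` in
its power series gives `∫ F e^{-δx} = 0`; repeating this, one step of `δ` at a time, gives
`∫ F e^{-nδx} = 0` for all `n`, i.e. `F` annihilates every polynomial in `y = e^{-δx} ∈ (0, 1]`.
By Weierstrass it then annihilates every compactly supported continuous function on `[0, ∞)`,
so `F = 0`, hence `g = 0`.
-/

open MeasureTheory Polynomial Real Set Filter
open scoped Nat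

lemma Real.hasSum_pow_div_factorial (x : ℝ) : HasSum (fun n => x ^ n / n !) (exp x) := by
  rw [Real.exp_eq_exp_ℝ]
  exact NormedSpace.expSeries_div_hasSum_exp x

section HalfLine

variable {μ : Measure ℝ} {F : ℝ → ℝ} {δ : ℝ}

theorem integral_mul_exp_neg_eq_zero_of_moments (hμ : ∀ᵐ x ∂μ, 0 ≤ x) (hδ : 0 ≤ δ)
    (hF : Integrable (fun x => F x * exp (δ * x)) μ)
    (hmom : ∀ m : ℕ, ∫ x, F x * x ^ m ∂μ = 0) :
    ∫ x, F x * exp (-(δ * x)) ∂μ = 0 := by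
  have hFm : AEStronglyMeasurable F μ := by
    refine (hF.aestronglyMeasurable.mul
      (continuous_exp.comp (continuous_const_mul δ).neg).aestronglyMeasurable).congr
      (ae_of_all _ fun x => ?_)
    simp [mul_assoc, ← exp_add]
  have hsum : HasSum (fun n : ℕ => ∫ x, F x * ((-(δ * x)) ^ n / n !) ∂μ)
      (∫ x, F x * exp (-(δ * x)) ∂μ) := by
    refine hasSum_integral_of_dominated_convergence (fun n x => |F x| * ((δ * x) ^ n / n !))
      (fun n => hFm.mul (by fun_prop : Continuous _).aestronglyMeasurable) (fun n => ?_)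
      (ae_of_all _ fun x => ((hasSum_pow_div_factorial _).mul_left _).summable) ?_
      (ae_of_all _ fun x => (hasSum_pow_div_factorial _).mul_left _)
    · filter_upwards [hμ] with x hx
      rw [norm_mul, norm_div, norm_pow, norm_neg, Real.norm_eq_abs, Real.norm_eq_abs,
        Real.norm_natCast, abs_of_nonneg (mul_nonneg hδ hx)]
    · simp_rw [((hasSum_pow_div_factorial _).mul_left _).tsum_eq]
      refine hF.abs.congr (ae_of_all _ fun x => ?_)
      simp [abs_mul]
  have hterm : ∀ n : ℕ, ∫ x, F x * ((-(δ * x)) ^ n / n !) ∂μ = 0 := fun n => by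
    have h : ∀ x, F x * ((-(δ * x)) ^ n / n !) = (-δ) ^ n / n ! * (F x * x ^ n) :=
      fun x => by ring
    simp_rw [h, integral_const_mul, hmom, mul_zero]
  simp only [hterm] at hsum
  exact hsum.unique hasSum_zero

theorem integral_mul_exp_neg_nat_mul_mul_pow_eq_zero_of_moments (hμ : ∀ᵐ x ∂μ, 0 ≤ x) (hδ : 0 ≤ δ)
    (hF : ∀ m : ℕ, Integrable (fun x => F x * x ^ m * exp (δ * x)) μ)
    (hmom : ∀ m : ℕ, ∫ x, F x * x ^ m ∂μ = 0) (n m : ℕ) :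
    ∫ x, F x * exp (-(n * δ * x)) * x ^ m ∂μ = 0 := by
  induction n generalizing m with
  | zero => simpa using hmom m
  | succ n ih =>
    have hexp_le : ∀ᵐ x ∂μ, exp (-(n * δ * x)) ≤ 1 := by
      filter_upwards [hμ] with x hx
      exact exp_le_one_iff.2 (neg_nonpos.2 (by positivity))
    -- one more step of `δ`, applied to `F e^{-nδx} x^m`, whose moments vanish by `ih`
    have key := integral_mul_exp_neg_eq_zero_of_moments
      (F := fun x => F x * exp (-(n * δ * x)) * x ^ m) hμ hδ ?_
      fun j => by simpa [mul_assoc, pow_add] using ih (m + j)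
    · refine Eq.trans (integral_congr_ae (ae_of_all _ fun x => ?_)) key
      have h : exp (-((n + 1 : ℕ) * δ * x)) = exp (-(n * δ * x)) * exp (-(δ * x)) := by
        rw [← exp_add]; push_cast; ring_nf
      simp only [h]; ring
    · refine ((hF m).mul_bdd (g := fun x => exp (-(n * δ * x))) (c := 1)
        (by fun_prop : Continuous _).aestronglyMeasurable ?_).congr
        (ae_of_all _ fun x => by ring)
      filter_upwards [hexp_le] with x hx
      rwa [Real.norm_of_nonneg (exp_pos _).le]

lemma HasCompactSupport.exists_continuous_comp_exp_neg_eq {ψ : ℝ → ℝ} (hψs : HasCompactSupport ψ)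
    (hψ : Continuous ψ) (hδ : 0 < δ) :
    ∃ Φ : ℝ → ℝ, Continuous Φ ∧ ∀ x, 0 ≤ x → Φ (exp (-(δ * x))) = ψ x := by
  obtain ⟨A, hA, hψA⟩ := hψs.exists_pos_le_norm
  -- the `max` keeps `Φ` continuous at `0`: it is constant `ψ A = 0` on `[0, e^{-δA}]`
  refine ⟨fun y => ψ (-log (max y (exp (-(δ * A)))) / δ), ?_, fun x hx => ?_⟩
  · exact hψ.comp (((continuous_id.max continuous_const).log fun y =>
      ((exp_pos _).trans_le (le_max_right _ _)).ne').neg.div_const δ)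
  · dsimp only
    rcases le_total x A with hxA | hAx
    · rw [max_eq_left (exp_le_exp.2 (by nlinarith)), log_exp, neg_neg,
        mul_div_cancel_left₀ _ hδ.ne']
    · rw [max_eq_right (exp_le_exp.2 (by nlinarith)), log_exp, neg_neg,
        mul_div_cancel_left₀ _ hδ.ne', hψA A (by rw [norm_of_nonneg hA.le]),
        hψA x (by rwa [norm_of_nonneg hx])]

theorem integral_mul_comp_exp_neg_eq_zero (hμ : ∀ᵐ x ∂μ, 0 ≤ x) (hδ : 0 ≤ δ)
    (hF : Integrable F μ) (hexp : ∀ n : ℕ, ∫ x, F x * exp (-(n * δ * x)) ∂μ = 0)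
    {Φ : ℝ → ℝ} (hΦ : Continuous Φ) :
    ∫ x, F x * Φ (exp (-(δ * x))) ∂μ = 0 := by
  have hIcc : ∀ᵐ x ∂μ, exp (-(δ * x)) ∈ Icc (0 : ℝ) 1 := by
    filter_upwards [hμ] with x hx
    exact ⟨(exp_pos _).le, exp_le_one_iff.2 (neg_nonpos.2 (mul_nonneg hδ hx))⟩
  have hint : ∀ {Ψ : ℝ → ℝ}, Continuous Ψ → Integrable (fun x => F x * Ψ (exp (-(δ * x)))) μ := by
    intro Ψ hΨ
    obtain ⟨C, hC⟩ := isCompact_Icc.exists_bound_of_continuousOn hΨ.continuousOn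
    refine hF.mul_bdd (c := C) (by fun_prop : Continuous _).aestronglyMeasurable ?_
    filter_upwards [hIcc] with x hx using hC _ hx
  have hpoly : ∀ q : ℝ[X], ∫ x, F x * q.eval (exp (-(δ * x))) ∂μ = 0 := by
    intro q
    induction q using Polynomial.induction_on' with
    | add p q hp hq =>
      simp_rw [eval_add, mul_add]
      rw [integral_add (hint p.continuous) (hint q.continuous), hp, hq, add_zero]
    | monomial n a =>
      have h : ∀ x, F x * (monomial n a).eval (exp (-(δ * x))) = a * (F x * exp (-(n * δ * x))) :=
        fun x => by rw [eval_monomial, ← exp_nat_mul]; ring_nf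
      simp_rw [h, integral_const_mul, hexp, mul_zero]
  refine abs_nonpos_iff.1 (le_of_forall_pos_le_add fun ε hε => ?_)
  set C := ∫ x, |F x| ∂μ
  have hC : 0 ≤ C := integral_nonneg fun x => abs_nonneg _
  obtain ⟨q, hq⟩ := exists_polynomial_near_of_continuousOn 0 1 Φ hΦ.continuousOn (ε / (C + 1))
    (by positivity)
  have hsub : ∫ x, F x * (Φ (exp (-(δ * x))) - q.eval (exp (-(δ * x)))) ∂μ
      = ∫ x, F x * Φ (exp (-(δ * x))) ∂μ := by
    simp_rw [mul_sub]
    rw [integral_sub (hint hΦ) (hint q.continuous), hpoly, sub_zero]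
  calc |∫ x, F x * Φ (exp (-(δ * x))) ∂μ|
      ≤ ∫ x, |F x| * (ε / (C + 1)) ∂μ := by
        rw [← hsub, ← Real.norm_eq_abs]
        refine norm_integral_le_of_norm_le (hF.abs.mul_const _) ?_
        filter_upwards [hIcc] with x hx
        rw [norm_mul, Real.norm_eq_abs, Real.norm_eq_abs, abs_sub_comm]
        exact mul_le_mul_of_nonneg_left (hq _ hx).le (abs_nonneg _)
    _ = C * (ε / (C + 1)) := integral_mul_const _ _
    _ ≤ 0 + ε := by
        rw [zero_add, mul_div_assoc', div_le_iff₀ (by positivity)]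
        nlinarith

theorem ae_eq_zero_of_integral_mul_exp_neg_nat_mul_eq_zero (hμ : ∀ᵐ x ∂μ, 0 ≤ x) (hδ : 0 < δ)
    (hF : Integrable F μ) (hexp : ∀ n : ℕ, ∫ x, F x * exp (-(n * δ * x)) ∂μ = 0) :
    F =ᵐ[μ] 0 := by
  refine ae_eq_zero_of_integral_contDiff_smul_eq_zero hF.locallyIntegrable fun ψ hψ hψs => ?_
  obtain ⟨Φ, hΦ, hΦψ⟩ := hψs.exists_continuous_comp_exp_neg_eq hψ.continuous hδ
  rw [← integral_mul_comp_exp_neg_eq_zero hμ hδ.le hF hexp hΦ]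
  refine integral_congr_ae ?_
  filter_upwards [hμ] with x hx
  rw [hΦψ x hx, smul_eq_mul, mul_comm]

theorem ae_eq_zero_of_integral_mul_pow_eq_zero (hμ : ∀ᵐ x ∂μ, 0 ≤ x) (hδ : 0 < δ)
    (hF : ∀ m : ℕ, Integrable (fun x => F x * x ^ m * exp (δ * x)) μ)
    (hmom : ∀ m : ℕ, ∫ x, F x * x ^ m ∂μ = 0) :
    F =ᵐ[μ] 0 := by
  have hFint : Integrable F μ := by
    refine ((hF 0).mul_bdd (g := fun x => exp (-(δ * x))) (c := 1)
      (by fun_prop : Continuous _).aestronglyMeasurable ?_).congr (ae_of_all _ fun x => ?_)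
    · filter_upwards [hμ] with x hx
      rw [norm_of_nonneg (exp_pos _).le]
      exact exp_le_one_iff.2 (neg_nonpos.2 (mul_nonneg hδ.le hx))
    · simp [mul_assoc, ← exp_add]
  refine ae_eq_zero_of_integral_mul_exp_neg_nat_mul_eq_zero hμ hδ hFint fun n => ?_
  simpa using integral_mul_exp_neg_nat_mul_mul_pow_eq_zero_of_moments hμ hδ.le hF hmom n 0

end HalfLine

open scoped ENNReal

def lpOfPolynomials (p : ℝ≥0∞) (μ : Measure ℝ) (E : Submodule ℝ ℝ[X]) :
    Submodule ℝ (Lp ℝ p μ) where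
  carrier := {f | ∃ q ∈ E, ∀ᵐ x ∂μ, f x = q.eval x}
  add_mem' := by
    rintro f g ⟨q, hq, hfq⟩ ⟨r, hr, hgr⟩
    refine ⟨q + r, E.add_mem hq hr, ?_⟩
    filter_upwards [hfq, hgr, Lp.coeFn_add f g] with x hf hg hfg
    rw [hfg, Pi.add_apply, hf, hg, eval_add]
  zero_mem' := ⟨0, E.zero_mem, (Lp.coeFn_zero ℝ p μ).mono fun x hx => hx.trans eval_zero.symm⟩
  smul_mem' := by
    rintro c f ⟨q, hq, hfq⟩
    refine ⟨c • q, E.smul_mem c hq, ?_⟩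
    filter_upwards [hfq, Lp.coeFn_smul c f] with x hf hcf
    rw [hcf, Pi.smul_apply, hf, eval_smul]

lemma toLp_mem_lpOfPolynomials {p : ℝ≥0∞} {μ : Measure ℝ} {E : Submodule ℝ ℝ[X]} {q : ℝ[X]}
    (hq : q ∈ E) (hmem : MemLp (fun x => q.eval x) p μ) :
    hmem.toLp _ ∈ lpOfPolynomials p μ E :=
  ⟨q, hq, hmem.coeFn_toLp⟩

theorem dense_lpOfPolynomials {μ : Measure ℝ} (hμ : ∀ᵐ x ∂μ, 0 ≤ x) {δ : ℝ} (hδ : 0 < δ)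
    (hmem : ∀ q : ℝ[X], MemLp (fun x => q.eval x * exp (δ * x)) 2 μ)
    {E : Submodule ℝ ℝ[X]} {r : ℝ[X]} (hr : ∀ᵐ x ∂μ, r.eval x ≠ 0) (hE : ∀ q, r * q ∈ E) :
    Dense (lpOfPolynomials 2 μ E : Set (Lp ℝ 2 μ)) := by
  have hpoly : ∀ q : ℝ[X], MemLp (fun x => q.eval x) 2 μ := fun q => by
    refine (hmem q).of_le q.continuous.aestronglyMeasurable ?_
    filter_upwards [hμ] with x hx
    rw [norm_mul, norm_of_nonneg (exp_pos _).le]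
    exact le_mul_of_one_le_right (norm_nonneg _) (one_le_exp (mul_nonneg hδ.le hx))
  rw [Submodule.dense_iff_topologicalClosure_eq_top, Submodule.topologicalClosure_eq_top_iff,
    Submodule.eq_bot_iff]
  intro g hg
  have hmom : ∀ m : ℕ, ∫ x, g x * r.eval x * x ^ m ∂μ = 0 := fun m => by
    have hq := hpoly (r * X ^ m)
    rw [← Submodule.inner_right_of_mem_orthogonal (toLp_mem_lpOfPolynomials (hE _) hq) hg,
      L2.inner_def]
    refine integral_congr_ae ?_
    filter_upwards [hq.coeFn_toLp] with x hx
    rw [hx, RCLike.inner_apply, conj_trivial, eval_mul, eval_pow, eval_X]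
    ring
  have hint : ∀ m : ℕ, Integrable (fun x => g x * r.eval x * x ^ m * exp (δ * x)) μ := fun m =>
    ((Lp.memLp g).integrable_mul (hmem (r * X ^ m))).congr (ae_of_all _ fun x => by
      simp only [Pi.mul_apply, eval_mul, eval_pow, eval_X]; ring)
  refine Lp.eq_zero_iff_ae_eq_zero.2 ?_
  filter_upwards [ae_eq_zero_of_integral_mul_pow_eq_zero hμ hδ hint hmom, hr] with x hgr hrx
  simpa [hrx] using hgr

theorem Polynomial.integrableOn_eval_mul_rpow_mul_exp_neg (q : ℝ[X]) {s b : ℝ} (hs : -1 < s)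
    (hb : 0 < b) : IntegrableOn (fun x => q.eval x * x ^ s * exp (-(b * x))) (Ioi 0) := by
  induction q using Polynomial.induction_on' with
  | add p q hp hq =>
    refine (hp.add hq).congr_fun (fun x _ => ?_) measurableSet_Ioi
    simp only [Pi.add_apply, eval_add, add_mul]
  | monomial n a =>
    have h := (integrableOn_rpow_mul_exp_neg_mul_rpow (s := s + n)
      (by linarith [n.cast_nonneg (α := ℝ)]) one_pos hb).const_mul a
    refine IntegrableOn.congr_fun h (fun x (hx : 0 < x) => ?_) measurableSet_Ioi
    rw [eval_monomial, rpow_add hx, rpow_natCast, rpow_one, neg_mul]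
    ring

noncomputable section

def hatWeight (k x : ℝ) : ℝ := exp (-x) * x ^ k / (x + k) ^ 2

def hatWeightMeasure (k : ℝ) : Measure ℝ :=
  (volume.restrict (Ioi 0)).withDensity fun x => ENNReal.ofReal (hatWeight k x)

end

lemma ae_pos_hatWeightMeasure (k : ℝ) : ∀ᵐ x ∂hatWeightMeasure k, 0 < x :=
  (withDensity_absolutelyContinuous _ _).ae_le (ae_restrict_mem measurableSet_Ioi)

theorem memLp_eval_mul_exp_hatWeightMeasure {k : ℝ} (hk : 0 < k) (q : ℝ[X]) {c : ℝ}
    (hc : c < 1 / 2) : MemLp (fun x => q.eval x * exp (c * x)) 2 (hatWeightMeasure k) := by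
  have hmeas : Measurable fun x => ENNReal.ofReal (hatWeight k x) := by
    unfold hatWeight; fun_prop
  rw [memLp_two_iff_integrable_sq (by fun_prop), hatWeightMeasure,
    integrable_withDensity_iff hmeas (ae_of_all _ fun _ => ENNReal.ofReal_lt_top)]
  refine (((q ^ 2).integrableOn_eval_mul_rpow_mul_exp_neg (s := k) (by linarith)
    (b := 1 - 2 * c) (by linarith)).const_mul (1 / k ^ 2)).mono'
    ((by fun_prop : Measurable _).mul (ENNReal.measurable_toReal.comp hmeas)).aestronglyMeasurable
    ((ae_restrict_iff' measurableSet_Ioi).2 (ae_of_all _ fun x (hx : 0 < x) => ?_))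
  have he : exp (c * x) ^ 2 * exp (-x) = exp (-((1 - 2 * c) * x)) := by
    rw [sq, ← exp_add, ← exp_add]; ring_nf
  rw [ENNReal.toReal_ofReal (by unfold hatWeight; positivity), hatWeight, eval_pow,
    norm_of_nonneg (by positivity)]
  calc (q.eval x * exp (c * x)) ^ 2 * (exp (-x) * x ^ k / (x + k) ^ 2)
      = q.eval x ^ 2 * x ^ k * exp (-((1 - 2 * c) * x)) / (x + k) ^ 2 := by rw [← he]; ring
    _ ≤ q.eval x ^ 2 * x ^ k * exp (-((1 - 2 * c) * x)) / k ^ 2 :=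
        div_le_div_of_nonneg_left (by positivity) (by positivity) (by nlinarith)
    _ = 1 / k ^ 2 * (q.eval x ^ 2 * x ^ k * exp (-((1 - 2 * c) * x))) := by ring

lemma X_add_C_sq_mul_mem_ker (k : ℝ) (q : ℝ[X]) :
    (X + C k) ^ 2 * q ∈ LinearMap.ker ((leval (-k)).comp derivative - leval (-k)) := by
  simp [derivative_pow]

/-- For k > 0, E^{-1,-k} = {p : p'(-k) - p(-k) = 0} is dense in
L²([0,∞), Ŵ_k dx) with Ŵ_k(x) = e^{-x} x^k / (x+k)². -/
theorem stmt_3 (k : ℝ) (hk : 0 < k) :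
    Dense {f : Lp ℝ 2
        ((volume.restrict (Set.Ioi (0 : ℝ))).withDensity
          (fun x => ENNReal.ofReal (Real.exp (-x) * x ^ k / (x + k) ^ 2))) |
      ∃ p : Polynomial ℝ,
        (Polynomial.derivative p).eval (-k) - p.eval (-k) = 0 ∧
        ∀ᵐ x ∂((volume.restrict (Set.Ioi (0 : ℝ))).withDensity
          (fun x => ENNReal.ofReal (Real.exp (-x) * x ^ k / (x + k) ^ 2))),
          f x = p.eval x} := by
  have hpos := ae_pos_hatWeightMeasure k
  exact dense_lpOfPolynomials (hpos.mono fun _ hx => hx.le) (δ := 1 / 4) (by norm_num)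
    (fun q => memLp_eval_mul_exp_hatWeightMeasure hk q (by norm_num)) (r := (X + C k) ^ 2)
    (hpos.mono fun x hx => by simp; positivity) (X_add_C_sq_mul_mem_ker k)
end

section
/- Let a,b be real with a ≠ 0, c = b + 1/a, let k_0 ≠ 0, k_1, k_2 be real constants, and define the operator T(y) = p(x) y'' + (q̃(x)/(x-b)) y' + (r̃(x)/(x-b)) y, where p(x) = k_2(x-b)^2 + k_1(x-b) + k_0, q̃(x) = a(x-c)(k_1(x-b) + 2k_0), r̃(x) = -a(k_1(x-b) + 2k_0). Then T maps the space E^{a,b}_n = {p ∈ P_n : p'(b) + a p(b) = 0} into itself for every n ≥ 1; in particular T applied to any polynomial in E^{a,b}_n is again a polynomial. -/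
open Polynomial

/-!
Put `w = (X - c) y' - y`. Since `a (b - c) = -1`, the boundary condition on `y` says exactly
`w(b) = 0`, so `w = (X - b) u` for a polynomial `u`, and `T y = p y'' + a (k₁ (X - b) + 2 k₀) u`
is a polynomial of degree at most `deg y`. Differentiating `(X - b) u = w` once and twice gives
`u(b) = (b - c) y''(b)` and `2 u'(b) = y''(b) + (b - c) y'''(b)`; substituting these, both
`(T y)'(b)` and `-a (T y)(b)` equal `a k₀ y''(b)`.
-/

namespace Polynomial

section Degree

variable {R : Type*} [CommRing R]

theorem natDegree_mul_iterate_derivative_le {q : R[X]} {k : ℕ} (hq : q.natDegree ≤ k)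
    (y : R[X]) : (q * derivative^[k] y).natDegree ≤ y.natDegree := by
  rcases lt_or_ge y.natDegree k with hlt | hle
  · simp [iterate_derivative_eq_zero hlt]
  · calc (q * derivative^[k] y).natDegree
        ≤ q.natDegree + (derivative^[k] y).natDegree := natDegree_mul_le
      _ ≤ k + (y.natDegree - k) := add_le_add hq (natDegree_iterate_derivative y k)
      _ = y.natDegree := by omega

theorem natDegree_mul_le_natDegree_X_sub_C_mul [Nontrivial R] {q : R[X]}
    (hq : q.natDegree ≤ 1) (b : R) (u : R[X]) :
    (q * u).natDegree ≤ ((X - C b) * u).natDegree := by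
  rcases eq_or_ne u 0 with rfl | hu
  · simp
  · rw [(monic_X_sub_C b).natDegree_mul' hu, natDegree_X_sub_C]
    exact natDegree_mul_le.trans (by omega)

end Degree

section Taylor

variable {R : Type*} [CommRing R] {u f : R[X]} {b : R}

theorem eval_eq_derivative_eval_of_X_sub_C_mul_eq (h : (X - C b) * u = f) :
    u.eval b = (derivative f).eval b := by
  simp [← h, derivative_mul]

theorem two_mul_derivative_eval_eq_of_X_sub_C_mul_eq (h : (X - C b) * u = f) :
    2 * (derivative u).eval b = (derivative (derivative f)).eval b := by
  simp [← h, derivative_mul]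
  ring

end Taylor

end Polynomial

section XOneOperator

variable {K : Type*} [Field K]

/-- The polynomial `T y`, written with `u = ((X - c) y' - y) / (X - b)`. -/
noncomputable def xOneImage (a b k0 k1 k2 : K) (y u : K[X]) : K[X] :=
  (C k2 * (X - C b) ^ 2 + C k1 * (X - C b) + C k0) * derivative (derivative y)
    + C a * (C k1 * (X - C b) + C (2 * k0)) * u

theorem isRoot_X_sub_C_mul_derivative_sub {a b c : K} (hac : a * (c - b) = 1) {y : K[X]}
    (hy : (derivative y).eval b + a * y.eval b = 0) :
    ((X - C c) * derivative y - y).IsRoot b := by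
  have : (b - c) * (derivative y).eval b - y.eval b
      = -(c - b) * ((derivative y).eval b + a * y.eval b) := by
    linear_combination (y.eval b) * hac
  simp [this, hy]

theorem natDegree_xOneImage_le (a b k0 k1 k2 : K) {c : K} {y u : K[X]}
    (hu : (X - C b) * u = (X - C c) * derivative y - y) :
    (xOneImage a b k0 k1 k2 y u).natDegree ≤ y.natDegree := by
  have hw : ((X - C c) * derivative y - y).natDegree ≤ y.natDegree :=
    (natDegree_sub_le _ _).trans <| max_le
      (natDegree_mul_iterate_derivative_le (k := 1) (natDegree_X_sub_C_le c) y) le_rfl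
  refine natDegree_add_le_of_degree_le ?_ ?_
  · exact natDegree_mul_iterate_derivative_le (k := 2) (by compute_degree) y
  · exact (natDegree_mul_le_natDegree_X_sub_C_mul (by compute_degree) b u).trans (hu ▸ hw)

theorem derivative_eval_add_mul_eval_xOneImage {a b c : K} (hac : a * (c - b) = 1)
    (k0 k1 k2 : K) {y u : K[X]} (hu : (X - C b) * u = (X - C c) * derivative y - y) :
    (derivative (xOneImage a b k0 k1 k2 y u)).eval b
      + a * (xOneImage a b k0 k1 k2 y u).eval b = 0 := by
  set Y2 := (derivative (derivative y)).eval b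
  set Y3 := (derivative (derivative (derivative y))).eval b
  have hu0 : u.eval b = (b - c) * Y2 := by
    simpa [derivative_mul] using eval_eq_derivative_eval_of_X_sub_C_mul_eq hu
  have hu1 : 2 * (derivative u).eval b = Y2 + (b - c) * Y3 := by
    simpa [derivative_mul] using two_mul_derivative_eval_eq_of_X_sub_C_mul_eq hu
  have hz0 : (xOneImage a b k0 k1 k2 y u).eval b = k0 * Y2 + 2 * a * k0 * u.eval b := by
    simp [xOneImage]
    ring
  have hz1 : (derivative (xOneImage a b k0 k1 k2 y u)).eval b
      = k1 * Y2 + k0 * Y3 + a * k1 * u.eval b + 2 * a * k0 * (derivative u).eval b := by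
    simp [xOneImage, derivative_mul, derivative_pow]
    ring
  rw [hz0, hz1]
  linear_combination (a * k1 + 2 * a ^ 2 * k0) * hu0 + (a * k0) * hu1
    - (k1 * Y2 + k0 * Y3 + 2 * a * k0 * Y2) * hac

theorem eval_xOneImage {a b c : K} (k0 k1 k2 : K) {y u : K[X]}
    (hu : (X - C b) * u = (X - C c) * derivative y - y) {x : K} (hx : x ≠ b) :
    (xOneImage a b k0 k1 k2 y u).eval x =
      (k2 * (x - b) ^ 2 + k1 * (x - b) + k0) * (derivative (derivative y)).eval x
        + (a * (x - c) * (k1 * (x - b) + 2 * k0)) / (x - b) * (derivative y).eval x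
        + (-(a * (k1 * (x - b) + 2 * k0))) / (x - b) * y.eval x := by
  have hux : u.eval x = ((x - c) * (derivative y).eval x - y.eval x) / (x - b) := by
    rw [eq_div_iff (sub_ne_zero.mpr hx), mul_comm]
    simpa using congrArg (eval x) hu
  simp only [xOneImage, eval_add, eval_mul, eval_sub, eval_pow, eval_X, eval_C, hux]
  ring

end XOneOperator

theorem stmt_4_general (a b c k0 k1 k2 : ℝ) (ha : a ≠ 0) (hc : c = b + 1 / a)
    (n : ℕ)
    (y : Polynomial ℝ) (hdeg : y.natDegree ≤ n)
    (hy : (Polynomial.derivative y).eval b + a * y.eval b = 0) :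
    ∃ z : Polynomial ℝ, z.natDegree ≤ n ∧
      (Polynomial.derivative z).eval b + a * z.eval b = 0 ∧
      ∀ x : ℝ, x ≠ b →
        z.eval x =
          (k2 * (x - b) ^ 2 + k1 * (x - b) + k0) *
              (Polynomial.derivative (Polynomial.derivative y)).eval x
          + (a * (x - c) * (k1 * (x - b) + 2 * k0)) / (x - b) *
              (Polynomial.derivative y).eval x
          + (-(a * (k1 * (x - b) + 2 * k0))) / (x - b) * y.eval x := by
  have hac : a * (c - b) = 1 := by rw [hc]; field_simp; ring
  obtain ⟨u, hu⟩ := dvd_iff_isRoot.mpr (isRoot_X_sub_C_mul_derivative_sub hac hy)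
  exact ⟨xOneImage a b k0 k1 k2 y u,
    (natDegree_xOneImage_le a b k0 k1 k2 hu.symm).trans hdeg,
    derivative_eval_add_mul_eval_xOneImage hac k0 k1 k2 hu.symm,
    fun x hx => eval_xOneImage k0 k1 k2 hu.symm hx⟩

/-- The X₁ operator
T(y) = p(x) y'' + (q̃(x)/(x-b)) y' + (r̃(x)/(x-b)) y with
p = k₂(x-b)² + k₁(x-b) + k₀, q̃ = a(x-c)(k₁(x-b)+2k₀), r̃ = -a(k₁(x-b)+2k₀),
c = b + 1/a, maps E^{a,b}_n = {p ∈ P_n : p'(b) + a p(b) = 0} into itself for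
every n ≥ 1; in particular T of any polynomial in E^{a,b}_n is a polynomial. -/
theorem stmt_4 (a b c k0 k1 k2 : ℝ) (ha : a ≠ 0) (hc : c = b + 1 / a)
    (hk0 : k0 ≠ 0) (n : ℕ) (hn : 1 ≤ n)
    (y : Polynomial ℝ) (hdeg : y.natDegree ≤ n)
    (hy : (Polynomial.derivative y).eval b + a * y.eval b = 0) :
    ∃ z : Polynomial ℝ, z.natDegree ≤ n ∧
      (Polynomial.derivative z).eval b + a * z.eval b = 0 ∧
      ∀ x : ℝ, x ≠ b →
        z.eval x =
          (k2 * (x - b) ^ 2 + k1 * (x - b) + k0) *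
              (Polynomial.derivative (Polynomial.derivative y)).eval x
          + (a * (x - c) * (k1 * (x - b) + 2 * k0)) / (x - b) *
              (Polynomial.derivative y).eval x
          + (-(a * (k1 * (x - b) + 2 * k0))) / (x - b) * y.eval x :=
  stmt_4_general a b c k0 k1 k2 ha hc n y hdeg hy
end

section
/- With T as in the general X_1 operator (p(x) = k_2(x-b)^2 + k_1(x-b) + k_0, k_0 ≠ 0, q̃(x) = a(x-c)(k_1(x-b)+2k_0), r̃(x) = -a(k_1(x-b)+2k_0), c = b+1/a), if y_n ∈ E^{a,b}_n is an eigenfunction of T of degree n ≥ 1, then the eigenvalue equals λ_n = (n-1)(n k_2 + a k_1). -/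
/-! Multiplying the eigenvalue equation by `x - b` and substituting `x = t + b` turns it into a
polynomial identity `A₂ z'' + A₁ z' + A₀ z = λ t z` for `z(t) = y(t + b)`, with `deg Aᵢ ≤ i + 1`.
In degree `n + 1` only the leading coefficient of `z` contributes, on both sides, and cancelling
it leaves `λ = n (n - 1) k₂ + n a k₁ - a k₁`. -/

namespace Polynomial

variable {R : Type*} [CommRing R]

theorem coeff_succ_mul_iterate_derivative {A z : R[X]} {k n : ℕ}
    (hA : A.natDegree ≤ k + 1) (hz : z.natDegree ≤ n) :
    (A * derivative^[k] z).coeff (n + 1) = A.coeff (k + 1) * (n.descFactorial k • z.coeff n) := by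
  rcases le_or_gt k n with hkn | hnk
  · have hD : (derivative^[k] z).natDegree ≤ n - k :=
      (natDegree_iterate_derivative z k).trans (Nat.sub_le_sub_right hz k)
    rw [show n + 1 = (k + 1) + (n - k) by omega, coeff_mul_add_eq_of_natDegree_le hA hD,
      coeff_iterate_derivative, Nat.sub_add_cancel hkn]
  · rw [iterate_derivative_eq_zero (hz.trans_lt hnk), (Nat.descFactorial_eq_zero_iff_lt).2 hnk]
    simp

theorem coeff_one_eq_of_second_order_eq_mul [IsDomain R] {A₀ A₁ A₂ B z : R[X]}
    (h₀ : A₀.natDegree ≤ 1) (h₁ : A₁.natDegree ≤ 2) (h₂ : A₂.natDegree ≤ 3)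
    (hB : B.natDegree ≤ 1) (hz : z ≠ 0)
    (heq : A₂ * derivative (derivative z) + A₁ * derivative z + A₀ * z = B * z) :
    B.coeff 1 = A₂.coeff 3 * (z.natDegree * (z.natDegree - 1)) + A₁.coeff 2 * z.natDegree
      + A₀.coeff 1 := by
  have e₂ := coeff_succ_mul_iterate_derivative (k := 2) h₂ (le_refl z.natDegree)
  have e₁ := coeff_succ_mul_iterate_derivative (k := 1) h₁ (le_refl z.natDegree)
  have e₀ := coeff_succ_mul_iterate_derivative (k := 0) h₀ (le_refl z.natDegree)
  have eB := coeff_succ_mul_iterate_derivative (k := 0) hB (le_refl z.natDegree)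
  simp only [Function.iterate_succ, Function.iterate_zero, Function.comp_apply, id,
    Nat.descFactorial_zero, Nat.descFactorial_one, nsmul_eq_mul, Nat.cast_descFactorial_two]
    at e₂ e₁ e₀ eB
  have key := congrArg (coeff · (z.natDegree + 1)) heq
  simp only [coeff_add, e₂, e₁, e₀, eB] at key
  have hlc : z.coeff z.natDegree ≠ 0 := leadingCoeff_ne_zero.2 hz
  refine mul_right_cancel₀ hlc ?_
  simp only [Nat.reduceAdd, Nat.cast_one, one_mul] at key
  linear_combination -key

end Polynomial

open Polynomial

theorem comp_X_add_C_eigen_equation {a b c k0 k1 k2 lam : ℝ} {y : ℝ[X]}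
    (heig : ∀ x : ℝ, x ≠ b →
      (k2 * (x - b) ^ 2 + k1 * (x - b) + k0) * (derivative (derivative y)).eval x
        + (a * (x - c) * (k1 * (x - b) + 2 * k0)) / (x - b) * (derivative y).eval x
        + (-(a * (k1 * (x - b) + 2 * k0))) / (x - b) * y.eval x
        = lam * y.eval x) :
    (C k2 * X ^ 3 + C k1 * X ^ 2 + C k0 * X) * derivative (derivative (y.comp (X + C b)))
      + (C (a * k1) * X ^ 2 + C (a * (k1 * (b - c) + 2 * k0)) * X + C (2 * a * k0 * (b - c)))
        * derivative (y.comp (X + C b))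
      + (C (-(a * k1)) * X + C (-(2 * a * k0))) * y.comp (X + C b)
      = C lam * X * y.comp (X + C b) := by
  simp only [derivative_comp, derivative_X_add_C, one_mul]
  refine eq_of_infinite_eval_eq _ _ (Set.infinite_of_finite_compl (s := {0}ᶜ) ?_ |>.mono ?_)
  · simp
  · intro t (ht : t ≠ 0)
    have h := heig (t + b) (by simpa using ht)
    simp only [add_sub_cancel_right] at h
    simp only [Set.mem_ofPred_eq, eval_add, eval_mul, eval_pow, eval_C, eval_X,
      eval_comp]
    field_simp at h
    linear_combination h

theorem stmt_5_general (a b c k0 k1 k2 : ℝ)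
    (n : ℕ) (hn : 1 ≤ n)
    (y : Polynomial ℝ) (hdeg : y.natDegree = n)
    (lam : ℝ)
    (heig : ∀ x : ℝ, x ≠ b →
      (k2 * (x - b) ^ 2 + k1 * (x - b) + k0) *
          (Polynomial.derivative (Polynomial.derivative y)).eval x
        + (a * (x - c) * (k1 * (x - b) + 2 * k0)) / (x - b) *
            (Polynomial.derivative y).eval x
        + (-(a * (k1 * (x - b) + 2 * k0))) / (x - b) * y.eval x
        = lam * y.eval x) :
    lam = ((n : ℝ) - 1) * ((n : ℝ) * k2 + a * k1) := by
  have hz_deg : (y.comp (X + C b)).natDegree = n := by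
    rw [natDegree_comp, natDegree_X_add_C, mul_one, hdeg]
  have hz : y.comp (X + C b) ≠ 0 := ne_zero_of_natDegree_gt (hz_deg ▸ hn)
  have h := coeff_one_eq_of_second_order_eq_mul (by compute_degree) (by compute_degree)
    (by compute_degree) (by compute_degree) hz (comp_X_add_C_eigen_equation heig)
  simp only [coeff_mul_X, coeff_C, ↓reduceIte, coeff_add, coeff_C_mul, coeff_X_pow, mul_one,
    Nat.succ_ne_self, two_ne_zero, mul_zero, add_zero, hz_deg] at h
  linear_combination h

/-- With T the general X₁ operator, if y_n ∈ E^{a,b}_n is an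
eigenfunction of T of degree n ≥ 1, then the eigenvalue equals
λ_n = (n-1)(n k₂ + a k₁). -/
theorem stmt_5 (a b c k0 k1 k2 : ℝ) (ha : a ≠ 0) (hc : c = b + 1 / a)
    (hk0 : k0 ≠ 0) (n : ℕ) (hn : 1 ≤ n)
    (y : Polynomial ℝ) (hdeg : y.natDegree = n)
    (hy : (Polynomial.derivative y).eval b + a * y.eval b = 0)
    (lam : ℝ)
    (heig : ∀ x : ℝ, x ≠ b →
      (k2 * (x - b) ^ 2 + k1 * (x - b) + k0) *
          (Polynomial.derivative (Polynomial.derivative y)).eval x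
        + (a * (x - c) * (k1 * (x - b) + 2 * k0)) / (x - b) *
            (Polynomial.derivative y).eval x
        + (-(a * (k1 * (x - b) + 2 * k0))) / (x - b) * y.eval x
        = lam * y.eval x) :
    lam = ((n : ℝ) - 1) * ((n : ℝ) * k2 + a * k1) :=
  stmt_5_general a b c k0 k1 k2 n hn y hdeg lam heig
end

section
/- For α,β > -1 with α ≠ β and sgn α = sgn β, with a = (β-α)/2, b = (β+α)/(β-α), c = b + 1/a, the weight Ŵ_{α,β}(x) = (1-x)^α (1+x)^β/(x-b)^2 satisfies Pearson's equation (p(x)W(x))' = q(x)W(x) on (-1,1), where p(x) = x^2 - 1 and q(x) = 2a(1-bx)(x-c)/(b-x). -/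
/-!
The Jacobi weight `w = (1 - x)^α (1 + x)^β` satisfies `(p w)' = ((α + β + 2) x + α - β) w`.
Dividing by `(x - b)^2`, which does not vanish on `(-1, 1)` because
`b² - 1 = 4αβ / (β - α)² > 0`, subtracts `2 p / (x - b)` from that coefficient; writing
`α = a (b - 1)` and `β = a (b + 1)`, the result simplifies to `q`.
-/

open Real

lemma mul_pos_of_sign_eq {α β : ℝ} (h : sign α = sign β) (hα : α ≠ 0) : 0 < α * β := by
  have hβ : β ≠ 0 := fun hβ => hα (sign_eq_zero_iff.mp (by rw [h, hβ, sign_zero]))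
  have h1 := sign_mul_pos_of_ne_zero α hα
  have h2 := sign_mul_pos_of_ne_zero β hβ
  rcases sign_apply_eq_of_ne_zero α hα with hs | hs <;>
    rw [← h, hs] at h2 <;> rw [hs] at h1 <;> nlinarith

lemma one_lt_sq_add_div_sub {α β : ℝ} (hαβ : 0 < α * β) (hne : α ≠ β) :
    1 < ((β + α) / (β - α)) ^ 2 := by
  have hsub : 0 < (β - α) ^ 2 := by positivity
  rw [div_pow, one_lt_div hsub]
  nlinarith

theorem hasDerivAt_jacobi_pearson (α β : ℝ) {x : ℝ} (hx : x ∈ Set.Ioo (-1 : ℝ) 1) :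
    HasDerivAt (fun t : ℝ => (t ^ 2 - 1) * ((1 - t) ^ α * (1 + t) ^ β))
      (((α + β + 2) * x + (α - β)) * ((1 - x) ^ α * (1 + x) ^ β)) x := by
  obtain ⟨hx1, hx2⟩ := hx
  have h1 : 0 < 1 - x := by linarith
  have h2 : 0 < 1 + x := by linarith
  have hA : HasDerivAt (fun t : ℝ => (1 - t) ^ α) (α * (1 - x) ^ (α - 1) * (-1)) x :=
    (hasDerivAt_rpow_const (Or.inl h1.ne')).comp x ((hasDerivAt_id x).const_sub 1)
  have hB : HasDerivAt (fun t : ℝ => (1 + t) ^ β) (β * (1 + x) ^ (β - 1) * 1) x :=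
    (hasDerivAt_rpow_const (Or.inl h2.ne')).comp x ((hasDerivAt_id x).const_add 1)
  have hp : HasDerivAt (fun t : ℝ => t ^ 2 - 1) (2 * x) x := by
    simpa using (hasDerivAt_pow 2 x).sub_const 1
  refine (hp.fun_mul (hA.fun_mul hB)).congr_deriv ?_
  rw [rpow_sub_one h1.ne', rpow_sub_one h2.ne']
  field_simp
  ring

theorem HasDerivAt.div_sub_sq {f : ℝ → ℝ} {f' x : ℝ} (b : ℝ) (hf : HasDerivAt f f' x)
    (hxb : x ≠ b) :
    HasDerivAt (fun t => f t / (t - b) ^ 2) ((f' - 2 * f x / (x - b)) / (x - b) ^ 2) x := by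
  have hxb' : x - b ≠ 0 := sub_ne_zero.mpr hxb
  have hd : HasDerivAt (fun t : ℝ => (t - b) ^ 2) (2 * (x - b)) x := by
    simpa using ((hasDerivAt_id x).sub_const b).fun_pow 2
  refine (hf.fun_div hd (pow_ne_zero 2 hxb')).congr_deriv ?_
  field_simp

lemma pearson_coeff_eq {a b c x : ℝ} (ha : a ≠ 0) (hxb : x ≠ b) (hc : c = b + 1 / a) :
    (a * (b - 1) + a * (b + 1) + 2) * x + (a * (b - 1) - a * (b + 1))
        - 2 * (x ^ 2 - 1) / (x - b) =
      2 * a * (1 - b * x) * (x - c) / (b - x) := by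
  have hxb' : x - b ≠ 0 := sub_ne_zero.mpr hxb
  have hbx : b - x ≠ 0 := sub_ne_zero.mpr hxb.symm
  subst hc
  field_simp
  ring

theorem stmt_6_general (α β a b c : ℝ) (hne : α ≠ β)
    (hsgn : Real.sign α = Real.sign β)
    (hab : a = (β - α) / 2) (hbb : b = (β + α) / (β - α)) (hc : c = b + 1 / a) :
    ∀ x ∈ Set.Ioo (-1 : ℝ) 1,
      HasDerivAt (fun t : ℝ => (t ^ 2 - 1) * ((1 - t) ^ α * (1 + t) ^ β / (t - b) ^ 2))
        (2 * a * (1 - b * x) * (x - c) / (b - x) *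
          ((1 - x) ^ α * (1 + x) ^ β / (x - b) ^ 2)) x := by
  intro x hx
  have hα0 : α ≠ 0 := by
    rintro rfl
    exact hne (sign_eq_zero_iff.mp (by rw [← hsgn, sign_zero])).symm
  have hb : 1 < b ^ 2 := hbb ▸ one_lt_sq_add_div_sub (mul_pos_of_sign_eq hsgn hα0) hne
  have hxb : x ≠ b := by
    rintro rfl
    nlinarith [hx.1, hx.2]
  have hba : β - α ≠ 0 := sub_ne_zero.mpr hne.symm
  have ha : a ≠ 0 := by rw [hab]; exact div_ne_zero hba two_ne_zero
  have hαa : α = a * (b - 1) := by rw [hab, hbb]; field_simp; ring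
  have hβa : β = a * (b + 1) := by rw [hab, hbb]; field_simp; ring
  have hW := (hasDerivAt_jacobi_pearson α β hx).div_sub_sq b hxb
  convert hW using 1
  · funext t
    ring
  · rw [← pearson_coeff_eq ha hxb hc, ← hαa, ← hβa]
    ring

/-- For α,β > -1 with α ≠ β and sgn α = sgn β, with a = (β-α)/2,
b = (β+α)/(β-α), c = b + 1/a, the weight Ŵ_{α,β}(x) = (1-x)^α (1+x)^β/(x-b)²
satisfies Pearson's equation (p W)' = q W on (-1,1), where p(x) = x² - 1 and
q(x) = 2a(1-bx)(x-c)/(b-x). -/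
theorem stmt_6 (α β a b c : ℝ) (hα : -1 < α) (hβ : -1 < β) (hne : α ≠ β)
    (hsgn : Real.sign α = Real.sign β)
    (hab : a = (β - α) / 2) (hbb : b = (β + α) / (β - α)) (hc : c = b + 1 / a) :
    ∀ x ∈ Set.Ioo (-1 : ℝ) 1,
      HasDerivAt (fun t : ℝ => (t ^ 2 - 1) * ((1 - t) ^ α * (1 + t) ^ β / (t - b) ^ 2))
        (2 * a * (1 - b * x) * (x - c) / (b - x) *
          ((1 - x) ^ α * (1 + x) ^ β / (x - b) ^ 2)) x :=
  stmt_6_general α β a b c hne hsgn hab hbb hc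
end

section
/- For k > 0, define A_k(y) = -((x+k+1)/(x+k))(y' - y) - y and B_k(y) = x((x+k)/(x+k+1))(y' - y) + k y. Then T_k = B_k ∘ A_k, where T_k(y) = -x y'' + ((x-k)/(x+k))((x+k+1)y' - y). -/
/-- Lowering operator A_k(y) = -((x+k+1)/(x+k))(y' - y) - y. -/
noncomputable def lagA (k : ℝ) (y : ℝ → ℝ) : ℝ → ℝ :=
  fun x => -((x + k + 1) / (x + k)) * (deriv y x - y x) - y x

/-- Raising operator B_k(y) = x((x+k)/(x+k+1))(y' - y) + k y. -/
noncomputable def lagB (k : ℝ) (y : ℝ → ℝ) : ℝ → ℝ :=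
  fun x => x * ((x + k) / (x + k + 1)) * (deriv y x - y x) + k * y x

/-- X₁-Laguerre operator T_k(y) = -x y'' + ((x-k)/(x+k))((x+k+1)y' - y). -/
noncomputable def lagT (k : ℝ) (y : ℝ → ℝ) : ℝ → ℝ :=
  fun x => -x * deriv (deriv y) x + (x - k) / (x + k) * ((x + k + 1) * deriv y x - y x)

theorem hasDerivAt_lagA {k x : ℝ} {y : ℝ → ℝ} (hy : DifferentiableAt ℝ y x)
    (hy' : DifferentiableAt ℝ (deriv y) x) (hxk : x + k ≠ 0) :
    HasDerivAt (lagA k y)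
      ((deriv y x - y x) / (x + k) ^ 2
        - (x + k + 1) / (x + k) * (deriv (deriv y) x - deriv y x) - deriv y x) x := by
  have hq : HasDerivAt (fun t => (t + k + 1) / (t + k)) (-1 / (x + k) ^ 2) x :=
    ((((hasDerivAt_id' x).add_const k).add_const 1).div
      ((hasDerivAt_id' x).add_const k) hxk).congr_deriv (by ring)
  refine ((hq.neg.mul (hy'.hasDerivAt.sub hy.hasDerivAt)).sub hy.hasDerivAt).congr_deriv ?_
  simp only [Pi.neg_apply, Pi.sub_apply]
  ring

theorem lagB_lagA_apply {k x : ℝ} {y : ℝ → ℝ} (hy : DifferentiableAt ℝ y x)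
    (hy' : DifferentiableAt ℝ (deriv y) x) (hxk : x + k ≠ 0) (hxk1 : x + k + 1 ≠ 0) :
    lagB k (lagA k y) x = lagT k y x := by
  simp only [lagB, lagT, (hasDerivAt_lagA hy hy' hxk).deriv, lagA]
  field_simp
  ring

/-- For k > 0, T_k = B_k ∘ A_k as differential expressions on
twice-differentiable functions on (0,∞). -/
theorem stmt_8 (k : ℝ) (hk : 0 < k) (y : ℝ → ℝ) (hy : ContDiff ℝ 2 y) :
    ∀ x ∈ Set.Ioi (0 : ℝ), lagB k (lagA k y) x = lagT k y x := by
  intro x hx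
  have hx : 0 < x := hx
  exact lagB_lagA_apply (hy.differentiable two_ne_zero x) (hy.differentiable_deriv_two x)
    (by positivity) (by positivity)
end

section
/- For k > 0, with A_k and B_k defined by A_k(y) = -((x+k+1)/(x+k))(y'-y) - y and B_k(y) = x((x+k)/(x+k+1))(y'-y) + k y, the intertwining identity T_k = A_{k-1} ∘ B_{k-1} - 1 holds, where T_k(y) = -x y'' + ((x-k)/(x+k))((x+k+1)y' - y). -/
/-! Writing `c(x) = x (x+k) / (x+k+1)`, the product rule gives
`(B_k y)' = c' (y' - y) + c (y'' - y') + k y'`. Substituting this into `A_k` and clearing the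
denominators `x + k` and `x + k + 1` turns `A_k B_k y - y` into `T_{k+1} y`, a rational-function
identity in `x` that is linear in `y, y', y''`. -/

theorem hasDerivAt_lagB {k x : ℝ} {y : ℝ → ℝ} (hy : DifferentiableAt ℝ y x)
    (hy' : DifferentiableAt ℝ (deriv y) x) (hxk : x + k + 1 ≠ 0) :
    HasDerivAt (lagB k y)
      (((2 * x + k) * (x + k + 1) - x * (x + k)) / (x + k + 1) ^ 2 * (deriv y x - y x)
        + x * (x + k) / (x + k + 1) * (deriv (deriv y) x - deriv y x) + k * deriv y x) x := by
  have hc : HasDerivAt (fun t => t * (t + k) / (t + k + 1))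
      (((2 * x + k) * (x + k + 1) - x * (x + k)) / (x + k + 1) ^ 2) x := by
    have hnum := (hasDerivAt_id' x).fun_mul ((hasDerivAt_id' x).add_const k)
    have hden := ((hasDerivAt_id' x).add_const k).add_const 1
    exact (hnum.div hden hxk).congr_deriv (by ring)
  have hlagB : lagB k y = fun t => t * (t + k) / (t + k + 1) * (deriv y t - y t) + k * y t := by
    funext t
    simp only [lagB]
    ring
  rw [hlagB]
  exact (hc.fun_mul (hy'.hasDerivAt.sub hy.hasDerivAt)).add (hy.hasDerivAt.const_mul k)

theorem lagA_lagB_sub_self {k x : ℝ} {y : ℝ → ℝ} (hy : DifferentiableAt ℝ y x)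
    (hy' : DifferentiableAt ℝ (deriv y) x) (hxk : x + k ≠ 0) (hxk1 : x + k + 1 ≠ 0) :
    lagA k (lagB k y) x - y x = lagT (k + 1) y x := by
  have hxk1' : x + (k + 1) ≠ 0 := by rwa [← add_assoc]
  simp only [lagA, lagT, (hasDerivAt_lagB hy hy' hxk1).deriv, lagB]
  field_simp
  ring

/-- For k > 0, the intertwining identity T_k = A_{k-1} ∘ B_{k-1} - 1
holds as an identity of differential expressions with rational coefficients. -/
theorem stmt_9 (k : ℝ) (hk : 0 < k) (y : ℝ → ℝ) (hy : ContDiff ℝ 2 y) :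
    ∀ x ∈ Set.Ioi (0 : ℝ), x + k - 1 ≠ 0 →
      lagT k y x = lagA (k - 1) (lagB (k - 1) y) x - y x := by
  intro x hx hxk1
  have hxk : x + (k - 1) + 1 ≠ 0 := by
    have : 0 < x + k := add_pos hx hk
    intro h
    linarith
  have h := lagA_lagB_sub_self (hy.differentiable two_ne_zero x)
    (hy.differentiable_deriv_two x) (by rwa [← add_sub_assoc]) hxk
  rwa [sub_add_cancel, eq_comm] at h
end

section
/- For k > 0, A_k is adjoint to B_k in the sense that for all polynomials f, g: ∫_0^∞ A_k(f)(x) g(x) e^{-x} x^{k+1}/(x+k+1)^2 dx = ∫_0^∞ f(x) B_k(g)(x) e^{-x} x^k/(x+k)^2 dx. -/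
/-!
With `w(x) = e^{-x} x^{k+1} / ((x+k)(x+k+1))` one has
`w'/w = -1 + (k+1)/x - 1/(x+k) - 1/(x+k+1)`, and a direct computation turns this into
`f B_k(g) Ŵ_k - A_k(f) g Ŵ_{k+1} = (f g w)'` on `(0, ∞)`. The difference of the two integrals is
therefore the boundary term `[f g w]₀^∞`, which vanishes: `w(0) = 0` since `k + 1 > 0`, and `w`
decays exponentially. Both integrands are integrable, being polynomials times `e^{-x} x^s` times
a rational factor bounded on `[0, ∞)`.
-/

open MeasureTheory Polynomial

open Filter Topology Asymptotics Set Real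

lemma Polynomial.isBigO_eval_mul_exp_neg_mul_rpow (P : ℝ[X]) (s : ℝ) :
    (fun x => P.eval x * exp (-x) * x ^ s) =O[atTop] fun x => exp (-2⁻¹ * x) := by
  have hP : (fun x => P.eval x) =O[atTop] fun x => x ^ P.natDegree := by
    simpa using isBigO_atTop_of_degree_le (P := P) (Q := X ^ P.natDegree)
      (by simp [degree_le_natDegree])
  have hPs : (fun x => P.eval x * x ^ s) =O[atTop] fun x => x ^ ((P.natDegree : ℝ) + s) := by
    refine (hP.mul (isBigO_refl _ atTop)).congr' EventuallyEq.rfl ?_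
    filter_upwards [eventually_gt_atTop 0] with x hx
    rw [rpow_add hx, rpow_natCast]
  have hexp : (fun x => x ^ ((P.natDegree : ℝ) + s)) =o[atTop] fun x => exp (2⁻¹ * x) :=
    isLittleO_rpow_exp_pos_mul_atTop _ (by norm_num)
  refine ((hPs.trans hexp.isBigO).mul (isBigO_refl (fun x => exp (-x)) atTop)).congr
    (fun x => by ring) (fun x => ?_)
  rw [← exp_add]
  ring_nf

lemma Polynomial.tendsto_eval_mul_exp_neg_mul_rpow (P : ℝ[X]) (s : ℝ) :
    Tendsto (fun x => P.eval x * exp (-x) * x ^ s) atTop (𝓝 0) :=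
  (P.isBigO_eval_mul_exp_neg_mul_rpow s).trans_tendsto <|
    tendsto_exp_atBot.comp <| tendsto_id.const_mul_atTop_of_neg (by norm_num)

lemma Polynomial.integrableOn_Ioi_eval_mul_exp_neg_mul_rpow_mul (P : ℝ[X]) {s : ℝ}
    (hs : 0 ≤ s) {r : ℝ → ℝ} {C : ℝ} (hr : ContinuousOn r (Ici 0))
    (hrC : ∀ x ∈ Ici 0, ‖r x‖ ≤ C) :
    IntegrableOn (fun x => P.eval x * exp (-x) * x ^ s * r x) (Ioi 0) := by
  refine integrable_of_isBigO_exp_neg (by norm_num : (0 : ℝ) < 2⁻¹) ?_ ?_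
  · refine ContinuousOn.mul ?_ hr
    exact (P.continuous.mul (continuous_exp.comp continuous_neg)).continuousOn.mul
      (continuousOn_id.rpow_const fun _ _ => Or.inr hs)
  · have hrO : r =O[atTop] fun _ => (1 : ℝ) :=
      IsBigO.of_bound C <| by
        filter_upwards [eventually_ge_atTop 0] with x hx
        simpa using hrC x hx
    simpa using (P.isBigO_eval_mul_exp_neg_mul_rpow s).mul hrO

section Adjoint

variable {k : ℝ}

noncomputable def lagBoundaryWeight (k x : ℝ) : ℝ :=
  exp (-x) * x ^ (k + 1) / ((x + k) * (x + k + 1))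

noncomputable def lagAdjointLhs (k : ℝ) (f g : ℝ[X]) (x : ℝ) : ℝ :=
  lagA k (fun t => f.eval t) x * g.eval x * (exp (-x) * x ^ (k + 1) / (x + k + 1) ^ 2)

noncomputable def lagAdjointRhs (k : ℝ) (f g : ℝ[X]) (x : ℝ) : ℝ :=
  f.eval x * lagB k (fun t => g.eval t) x * (exp (-x) * x ^ k / (x + k) ^ 2)

lemma hasDerivAt_lagBoundaryWeight (hk : 0 ≤ k) {x : ℝ} (hx : 0 < x) :
    HasDerivAt (lagBoundaryWeight k)
      (lagBoundaryWeight k x * (-1 + (k + 1) / x - 1 / (x + k) - 1 / (x + k + 1))) x := by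
  have hxk : x + k ≠ 0 := by positivity
  have hxk1 : x + k + 1 ≠ 0 := by positivity
  have hnum := ((hasDerivAt_neg x).exp).mul (hasDerivAt_rpow_const (p := k + 1) (Or.inl hx.ne'))
  have hden := ((hasDerivAt_id x).add_const k).mul (((hasDerivAt_id x).add_const k).add_const 1)
  refine (hnum.div hden (mul_ne_zero hxk hxk1)).congr_deriv ?_
  simp only [lagBoundaryWeight, Pi.mul_apply, id_eq, add_sub_cancel_right, rpow_add_one hx.ne']
  field_simp
  ring

lemma hasDerivAt_eval_mul_eval_mul_lagBoundaryWeight (f g : ℝ[X]) (hk : 0 ≤ k) {x : ℝ}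
    (hx : 0 < x) :
    HasDerivAt (fun x => f.eval x * g.eval x * lagBoundaryWeight k x)
      (lagAdjointRhs k f g x - lagAdjointLhs k f g x) x := by
  have hxk : x + k ≠ 0 := by positivity
  have hxk1 : x + k + 1 ≠ 0 := by positivity
  refine (((f.hasDerivAt x).mul (g.hasDerivAt x)).mul
    (hasDerivAt_lagBoundaryWeight hk hx)).congr_deriv ?_
  simp only [lagAdjointRhs, lagAdjointLhs, lagA, lagB, lagBoundaryWeight, Polynomial.deriv,
    Pi.mul_apply, rpow_add_one hx.ne']
  field_simp
  ring

lemma integrableOn_Ioi_eval_mul_exp_neg_mul_rpow_mul_inv_sq_mul_sq (P : ℝ[X]) {s : ℝ}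
    (hs : 0 ≤ s) (hk : 0 < k) :
    IntegrableOn (fun x => P.eval x * exp (-x) * x ^ s * ((x + k) ^ 2 * (x + k + 1) ^ 2)⁻¹)
      (Ioi 0) := by
  refine P.integrableOn_Ioi_eval_mul_exp_neg_mul_rpow_mul hs (C := (k ^ 2 * (k + 1) ^ 2)⁻¹) ?_ ?_
  · refine ContinuousOn.inv₀ (by fun_prop) fun x (hx : 0 ≤ x) => ?_
    positivity
  · intro x (hx : 0 ≤ x)
    rw [norm_inv, norm_of_nonneg (by positivity)]
    gcongr <;> linarith

lemma integrableOn_lagAdjointLhs (f g : ℝ[X]) (hk : 0 < k) :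
    IntegrableOn (lagAdjointLhs k f g) (Ioi 0) := by
  refine (integrableOn_Ioi_eval_mul_exp_neg_mul_rpow_mul_inv_sq_mul_sq
    ((-(X + C (k + 1)) * (derivative f - f) - (X + C k) * f) * g * (X + C k))
    (by linarith : 0 ≤ k + 1) hk).congr_fun (fun x (hx : 0 < x) => ?_) measurableSet_Ioi
  have hxk : x + k ≠ 0 := by positivity
  have hxk1 : x + k + 1 ≠ 0 := by positivity
  simp only [lagAdjointLhs, lagA, Polynomial.deriv, eval_mul, eval_sub, eval_add, eval_neg,
    eval_X, eval_C]
  field_simp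
  ring

lemma integrableOn_lagAdjointRhs (f g : ℝ[X]) (hk : 0 < k) :
    IntegrableOn (lagAdjointRhs k f g) (Ioi 0) := by
  refine (integrableOn_Ioi_eval_mul_exp_neg_mul_rpow_mul_inv_sq_mul_sq
    (f * (X * (X + C k) * (derivative g - g) + C k * (X + C (k + 1)) * g) * (X + C (k + 1)))
    hk.le hk).congr_fun (fun x (hx : 0 < x) => ?_) measurableSet_Ioi
  have hxk : x + k ≠ 0 := by positivity
  have hxk1 : x + k + 1 ≠ 0 := by positivity
  simp only [lagAdjointRhs, lagB, Polynomial.deriv, eval_mul, eval_sub, eval_add, eval_X, eval_C]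
  field_simp
  ring

lemma lagBoundaryWeight_zero (hk : k + 1 ≠ 0) : lagBoundaryWeight k 0 = 0 := by
  simp [lagBoundaryWeight, zero_rpow hk]

lemma continuousAt_lagBoundaryWeight_zero (hk : 0 < k) : ContinuousAt (lagBoundaryWeight k) 0 := by
  have hden : (0 + k) * (0 + k + 1) ≠ 0 := by positivity
  exact ((continuous_exp.comp continuous_neg).continuousAt.mul
    (continuousAt_rpow_const 0 (k + 1) (Or.inr (by linarith)))).div (by fun_prop) hden

lemma tendsto_eval_mul_eval_mul_lagBoundaryWeight_atTop (f g : ℝ[X]) :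
    Tendsto (fun x => f.eval x * g.eval x * lagBoundaryWeight k x) atTop (𝓝 0) := by
  have hden : Tendsto (fun x => (x + k) * (x + k + 1)) atTop atTop :=
    (tendsto_atTop_add_const_right _ k tendsto_id).atTop_mul_atTop₀
      (tendsto_atTop_add_const_right _ 1 (tendsto_atTop_add_const_right _ k tendsto_id))
  have h := ((f * g).tendsto_eval_mul_exp_neg_mul_rpow (k + 1)).mul
    (tendsto_inv_atTop_zero.comp hden)
  rw [mul_zero] at h
  refine h.congr fun x => ?_
  simp only [Function.comp_apply, lagBoundaryWeight, eval_mul]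
  ring

end Adjoint

/-- For k > 0 and polynomials f, g:
∫₀^∞ A_k(f) g Ŵ_{k+1} dx = ∫₀^∞ f B_k(g) Ŵ_k dx, where
Ŵ_k(x) = e^{-x} x^k/(x+k)². -/
theorem stmt_10 (k : ℝ) (hk : 0 < k) (f g : Polynomial ℝ) :
    ∫ x in Set.Ioi (0 : ℝ),
        lagA k (fun t => f.eval t) x * g.eval x *
          (Real.exp (-x) * x ^ (k + 1) / (x + k + 1) ^ 2) =
    ∫ x in Set.Ioi (0 : ℝ),
        f.eval x * lagB k (fun t => g.eval t) x *
          (Real.exp (-x) * x ^ k / (x + k) ^ 2) := by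
  have hL := integrableOn_lagAdjointLhs f g hk
  have hR := integrableOn_lagAdjointRhs f g hk
  have hcont : ContinuousWithinAt (fun x => f.eval x * g.eval x * lagBoundaryWeight k x)
      (Ici 0) 0 :=
    ((f.continuous.mul g.continuous).continuousAt.mul
      (continuousAt_lagBoundaryWeight_zero hk)).continuousWithinAt
  have hFTC := integral_Ioi_of_hasDerivAt_of_tendsto hcont
    (fun x hx => hasDerivAt_eval_mul_eval_mul_lagBoundaryWeight f g hk.le hx) (hR.sub hL)
    (tendsto_eval_mul_eval_mul_lagBoundaryWeight_atTop f g)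
  rw [integral_sub hR hL, lagBoundaryWeight_zero (by positivity), mul_zero, zero_sub,
    neg_zero] at hFTC
  exact (sub_eq_zero.mp hFTC).symm
end

section
/- For k > 0 and n ≥ 1, define the X_1-Laguerre polynomial L̂_n^k(x) = -(x+k+1)L_{n-1}^{(k)}(x) + L_{n-2}^{(k)}(x), where L_m^{(k)} are the classical generalized Laguerre polynomials (with L_{-1}^{(k)} = 0). Then T_k(L̂_n^k) = (n-1) L̂_n^k, where T_k(y) = -x y'' + ((x-k)/(x+k))((x+k+1)y' - y). -/
open Polynomial

/-- Classical generalized Laguerre polynomials L_n^{(k)}, defined by the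
three-term recurrence (n+2) L_{n+2} = (2n+k+3 - x) L_{n+1} - (n+1+k) L_n,
with L_0 = 1, L_1 = k + 1 - x. -/
noncomputable def genLaguerre (k : ℝ) : ℕ → Polynomial ℝ
  | 0 => 1
  | 1 => Polynomial.C (k + 1) - Polynomial.X
  | n + 2 =>
      Polynomial.C (1 / ((n : ℝ) + 2)) *
        ((Polynomial.C (2 * (n : ℝ) + k + 3) - Polynomial.X) * genLaguerre k (n + 1)
          - Polynomial.C ((n : ℝ) + 1 + k) * genLaguerre k n)

/-- X₁-Laguerre polynomial L̂_n^k = -(x+k+1) L_{n-1}^{(k)} + L_{n-2}^{(k)},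
with the convention L_{-1}^{(k)} = 0 (so the last term is absent for n = 1). -/
noncomputable def hatL (k : ℝ) (n : ℕ) : Polynomial ℝ :=
  -(Polynomial.X + Polynomial.C (k + 1)) * genLaguerre k (n - 1)
    + if 2 ≤ n then genLaguerre k (n - 2) else 0

/-!
Multiplying by `x + k`, the claim becomes a polynomial identity. From the three-term recurrence one
gets, by a joint induction, `(L_{m+1}^{(k)})' = (L_m^{(k)})' - L_m^{(k)}` and the lowering relation
`(m+1) L_{m+1}^{(k)} = x (L_m^{(k)})' + (m+1+k-x) L_m^{(k)}`; differentiating the latter yields the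
Laguerre equation `x y'' + (k+1-x) y' + m y = 0`. Substituting
`L̂_{m+2} = -(x+k+1) L_{m+1} + L_m`, the identity is a linear combination of the Laguerre equations
for `L_{m+1}`, `L_m` and the derivative relation.
-/

namespace genLaguerre

variable (k : ℝ)

theorem recurrence (n : ℕ) :
    C ((n : ℝ) + 2) * genLaguerre k (n + 2)
      = (C (2 * (n : ℝ) + k + 3) - X) * genLaguerre k (n + 1)
        - C ((n : ℝ) + 1 + k) * genLaguerre k n := by
  have h : ((n : ℝ) + 2) ≠ 0 := by positivity
  rw [genLaguerre, ← mul_assoc, ← C_mul, mul_one_div, div_self h, C_1, one_mul]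

private theorem derivative_succ_and_lowering (m : ℕ) :
    derivative (genLaguerre k (m + 1)) = derivative (genLaguerre k m) - genLaguerre k m ∧
      C ((m : ℝ) + 1) * genLaguerre k (m + 1)
        = X * derivative (genLaguerre k m) + (C ((m : ℝ) + 1 + k) - X) * genLaguerre k m := by
  induction m with
  | zero => constructor <;> simp [genLaguerre]; ring
  | succ m ih =>
    obtain ⟨ihD, ihX⟩ := ih
    have hrec := recurrence k m
    have hrecD : C ((m : ℝ) + 2) * derivative (genLaguerre k (m + 2))
        = -genLaguerre k (m + 1)
          + (C (2 * (m : ℝ) + k + 3) - X) * derivative (genLaguerre k (m + 1))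
          - C ((m : ℝ) + 1 + k) * derivative (genLaguerre k m) := by
      have h := congrArg derivative hrec
      simp only [derivative_mul, derivative_sub, derivative_C, derivative_X] at h
      linear_combination h
    have hc : (C ((m : ℝ) + 2) : ℝ[X]) ≠ 0 := by
      rw [Ne, C_eq_zero]; positivity
    push_cast
    constructor
    · apply mul_left_cancel₀ hc
      linear_combination (norm := (simp only [map_add, map_mul, map_one, map_ofNat]; ring))
        hrecD + (C ((m : ℝ) + 1 + k) - X) * ihD + ihX
    · apply mul_left_cancel₀ hc
      linear_combination (norm := (simp only [map_add, map_mul, map_one, map_ofNat]; ring))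
        C ((m : ℝ) + 2) * (hrec - X * ihD + ihX)

theorem derivative_succ (m : ℕ) :
    derivative (genLaguerre k (m + 1)) = derivative (genLaguerre k m) - genLaguerre k m :=
  (derivative_succ_and_lowering k m).1

theorem lowering (m : ℕ) :
    C ((m : ℝ) + 1) * genLaguerre k (m + 1)
      = X * derivative (genLaguerre k m) + (C ((m : ℝ) + 1 + k) - X) * genLaguerre k m :=
  (derivative_succ_and_lowering k m).2

theorem ode (m : ℕ) :
    X * derivative (derivative (genLaguerre k m))
      + (C (k + 1) - X) * derivative (genLaguerre k m) + C (m : ℝ) * genLaguerre k m = 0 := by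
  have h := congrArg derivative (lowering k m)
  simp only [derivative_mul, derivative_add, derivative_sub, derivative_C, derivative_X] at h
  linear_combination (norm := (simp only [map_add, map_one]; ring))
    C ((m : ℝ) + 1) * derivative_succ k m - h

end genLaguerre

namespace hatL

variable (k : ℝ)

theorem one : hatL k 1 = -(X + C (k + 1)) := by
  simp [hatL, genLaguerre]

theorem add_two (m : ℕ) :
    hatL k (m + 2) = -(X + C (k + 1)) * genLaguerre k (m + 1) + genLaguerre k m := by
  simp [hatL]

/-- `(x + k) T_k` applied to `L̂_n^k`, as a polynomial. -/
theorem eigen_identity (n : ℕ) (hn : 1 ≤ n) :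
    -(X * (X + C k)) * derivative (derivative (hatL k n))
        + (X - C k) * ((X + C k + 1) * derivative (hatL k n) - hatL k n)
      = C ((n : ℝ) - 1) * ((X + C k) * hatL k n) := by
  obtain ⟨m, rfl⟩ | rfl : (∃ m, n = m + 2) ∨ n = 1 := by
    rcases Nat.exists_eq_add_of_le hn with ⟨j, rfl⟩
    rcases j with _ | m
    · exact Or.inr rfl
    · exact Or.inl ⟨m, by ring⟩
  · have hm : ((m + 2 : ℕ) : ℝ) - 1 = m + 1 := by push_cast; ring
    rw [hm]
    simp only [add_two, derivative_add, derivative_mul, derivative_neg, derivative_X,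
      derivative_C, derivative_one, derivative_zero]
    linear_combination (norm := (push_cast; simp only [map_add, map_one]; ring))
      (X + C k) * (X + C (k + 1)) * genLaguerre.ode k (m + 1) - (X + C k) * genLaguerre.ode k m
        - 2 * X * genLaguerre.derivative_succ k m
  · simp only [one, derivative_neg, derivative_add, derivative_X, derivative_C, derivative_one,
      derivative_zero]
    simp only [map_add, map_one, Nat.cast_one, sub_self, map_zero]
    ring

end hatL

theorem stmt_11_general (k : ℝ) (n : ℕ) (hn : 1 ≤ n) :
    ∀ x : ℝ, x ≠ -k →
      -x * (Polynomial.derivative (Polynomial.derivative (hatL k n))).eval x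
        + (x - k) / (x + k) *
            ((x + k + 1) * (Polynomial.derivative (hatL k n)).eval x - (hatL k n).eval x)
        = ((n : ℝ) - 1) * (hatL k n).eval x := by
  intro x hx
  have hxk : x + k ≠ 0 := fun h => hx (by linarith)
  have h := congrArg (eval x) (hatL.eigen_identity k n hn)
  simp only [eval_add, eval_mul, eval_sub, eval_neg, eval_X, eval_C, eval_one] at h
  field_simp
  linear_combination h

/-- For k > 0 and n ≥ 1, the X₁-Laguerre polynomial L̂_n^k
satisfies T_k(L̂_n^k) = (n-1) L̂_n^k, where
T_k(y) = -x y'' + ((x-k)/(x+k))((x+k+1)y' - y). -/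
theorem stmt_11 (k : ℝ) (hk : 0 < k) (n : ℕ) (hn : 1 ≤ n) :
    ∀ x : ℝ, x ≠ -k →
      -x * (Polynomial.derivative (Polynomial.derivative (hatL k n))).eval x
        + (x - k) / (x + k) *
            ((x + k + 1) * (Polynomial.derivative (hatL k n)).eval x - (hatL k n).eval x)
        = ((n : ℝ) - 1) * (hatL k n).eval x :=
  stmt_11_general k n hn
end

section
/- For k > 0 and n ≥ 1, the X_1-Laguerre polynomials L̂_n^k satisfy the three-term recurrence (n+1)[(x+k)^2(n+k) - k] L̂_{n+2}^k + (n+k)[(x+k)^2(x-2n-k-1) + 2k] L̂_{n+1}^k + (n+k-1)[(x+k)^2(n+k+1) - k] L̂_n^k = 0. -/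
/-!
Each of `L̂_{n+2}, L̂_{n+1}, L̂_n` is a combination of the Laguerre polynomials
`L_{n+1}, …, L_{n-2}`. Clearing the denominators `n (n + 1)` and using the Laguerre
recurrence to eliminate first `L_{n+1}` and then `L_n` leaves a combination of `L_{n-1}` and
`L_{n-2}` whose coefficients vanish identically. For `n = 1` the convention `L_{-1} = 0` changes
`L̂_1`, and the identity is checked directly from `2 L_2 = (k + 3 - x) L_1 - (k + 1)`.
-/

open Polynomial

theorem genLaguerre_add_two (k : ℝ) (m : ℕ) :
    C ((m : ℝ) + 2) * genLaguerre k (m + 2)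
      = (C (2 * (m : ℝ) + k + 3) - X) * genLaguerre k (m + 1)
        - C ((m : ℝ) + 1 + k) * genLaguerre k m := by
  rw [genLaguerre, ← mul_assoc, ← C_mul, mul_one_div_cancel (by positivity), C_1, one_mul]

theorem hatL_one (k : ℝ) : hatL k 1 = -(X + C (k + 1)) := by
  simp [hatL, genLaguerre]

theorem hatL_add_two (k : ℝ) (m : ℕ) :
    hatL k (m + 2) = -(X + C (k + 1)) * genLaguerre k (m + 1) + genLaguerre k m := by
  simp [hatL]

theorem hatL_recurrence_of_two_le (k : ℝ) {n : ℕ} (hn : 2 ≤ n) :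
    C ((n : ℝ) + 1) * ((X + C k) ^ 2 * C ((n : ℝ) + k) - C k) * hatL k (n + 2)
      + C ((n : ℝ) + k) * ((X + C k) ^ 2 * (X - C (2 * (n : ℝ) + k + 1)) + C (2 * k))
          * hatL k (n + 1)
      + C ((n : ℝ) + k - 1) * ((X + C k) ^ 2 * C ((n : ℝ) + k + 1) - C k) * hatL k n
      = 0 := by
  obtain ⟨m, rfl⟩ := Nat.exists_eq_add_of_le' hn
  have h1 := genLaguerre_add_two k m
  have h2 := genLaguerre_add_two k (m + 1)
  rw [hatL_add_two, hatL_add_two, hatL_add_two]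
  have hm : ((m : ℝ[X]) + 2) * ((m : ℝ[X]) + 3) ≠ 0 := by
    have : (((m : ℝ) + 2) * ((m : ℝ) + 3) : ℝ) ≠ 0 := by positivity
    exact_mod_cast this
  refine (mul_eq_zero.mp ?_).resolve_left hm
  push_cast at h1 h2 ⊢
  simp only [map_add, map_sub, map_mul, map_natCast, map_ofNat, map_one] at h1 h2 ⊢
  set x : ℝ[X] := X
  set c : ℝ[X] := C k
  set N : ℝ[X] := (m : ℝ[X])
  linear_combination
      -(N + 2) * (N + 3) * (x + c + 1) * ((x + c) ^ 2 * (N + 2 + c) - c) * h2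
      + (N + 3) * ((N + 3) * ((x + c) ^ 2 * (N + 2 + c) - c)
          - (x + c + 1) * ((N + 2 + c) * ((x + c) ^ 2 * (x - (2 * N + c + 5)) + 2 * c)
            + ((x + c) ^ 2 * (N + 2 + c) - c) * (2 * N + c + 5 - x))) * h1

theorem stmt_14_general (k : ℝ) (n : ℕ) (hn : 1 ≤ n) :
    Polynomial.C ((n : ℝ) + 1) *
        ((Polynomial.X + Polynomial.C k) ^ 2 * Polynomial.C ((n : ℝ) + k)
          - Polynomial.C k) * hatL k (n + 2)
      + Polynomial.C ((n : ℝ) + k) *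
          ((Polynomial.X + Polynomial.C k) ^ 2 *
              (Polynomial.X - Polynomial.C (2 * (n : ℝ) + k + 1))
            + Polynomial.C (2 * k)) * hatL k (n + 1)
      + Polynomial.C ((n : ℝ) + k - 1) *
          ((Polynomial.X + Polynomial.C k) ^ 2 * Polynomial.C ((n : ℝ) + k + 1)
            - Polynomial.C k) * hatL k n = 0 := by
  obtain rfl | hn := hn.eq_or_lt
  · have h := genLaguerre_add_two k 0
    rw [hatL_add_two k 1, hatL_add_two k 0, hatL_one]
    simp only [zero_add, genLaguerre.eq_1, genLaguerre.eq_2] at h ⊢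
    push_cast at h ⊢
    simp only [map_add, map_sub, map_mul, map_ofNat, map_one, map_zero] at h ⊢
    linear_combination -(X + C k + 1) * ((X + C k) ^ 2 * (1 + C k) - C k) * h
  · exact hatL_recurrence_of_two_le k hn

/-- For k > 0 and n ≥ 1, the X₁-Laguerre polynomials satisfy the
three-term recurrence
(n+1)[(x+k)²(n+k) - k] L̂_{n+2}^k + (n+k)[(x+k)²(x-2n-k-1) + 2k] L̂_{n+1}^k
+ (n+k-1)[(x+k)²(n+k+1) - k] L̂_n^k = 0. -/
theorem stmt_14 (k : ℝ) (hk : 0 < k) (n : ℕ) (hn : 1 ≤ n) :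
    Polynomial.C ((n : ℝ) + 1) *
        ((Polynomial.X + Polynomial.C k) ^ 2 * Polynomial.C ((n : ℝ) + k)
          - Polynomial.C k) * hatL k (n + 2)
      + Polynomial.C ((n : ℝ) + k) *
          ((Polynomial.X + Polynomial.C k) ^ 2 *
              (Polynomial.X - Polynomial.C (2 * (n : ℝ) + k + 1))
            + Polynomial.C (2 * k)) * hatL k (n + 1)
      + Polynomial.C ((n : ℝ) + k - 1) *
          ((Polynomial.X + Polynomial.C k) ^ 2 * Polynomial.C ((n : ℝ) + k + 1)
            - Polynomial.C k) * hatL k n = 0 :=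
  stmt_14_general k n hn
end

section
/- For k > 0 and all n ≥ 1, the X_1-Laguerre polynomial L̂_n^k does not vanish at x = -k, i.e. L̂_n^k(-k) ≠ 0. -/
/-! At `x = -k` the factor `x + k + 1` of `hatL` equals `1`, so `L̂_n^k(-k) = a_{n-2} - a_{n-1}`
with `a_n = L_n^{(k)}(-k)` (and `L̂_1^k(-k) = -1`). The three-term recurrence at `x = -k` can be
rewritten as `(n+2)(a_{n+2} - a_{n+1}) = (n+1+k)(a_{n+1} - a_n) + k a_{n+1}`; since
`a_1 - a_0 = 2k > 0`, induction shows that `a_n` is positive and strictly increasing. -/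

open Polynomial

lemma genLaguerre_eval_add_two (k x : ℝ) (n : ℕ) :
    ((n : ℝ) + 2) * (genLaguerre k (n + 2)).eval x =
      (2 * n + k + 3 - x) * (genLaguerre k (n + 1)).eval x
        - (n + 1 + k) * (genLaguerre k n).eval x := by
  rw [genLaguerre]
  simp only [eval_mul, eval_sub, eval_C, eval_X]
  field_simp

lemma genLaguerre_eval_neg_pos_and_lt_succ {k : ℝ} (hk : 0 < k) (n : ℕ) :
    0 < (genLaguerre k n).eval (-k) ∧
      (genLaguerre k n).eval (-k) < (genLaguerre k (n + 1)).eval (-k) := by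
  induction n with
  | zero =>
    simp only [genLaguerre, eval_one, eval_sub, eval_C, eval_X]
    constructor <;> linarith
  | succ n ih =>
    obtain ⟨hpos, hlt⟩ := ih
    set a : ℕ → ℝ := fun m => (genLaguerre k m).eval (-k)
    have hpos_succ : 0 < a (n + 1) := hpos.trans hlt
    have hstep : ((n : ℝ) + 2) * (a (n + 2) - a (n + 1)) =
        (n + 1 + k) * (a (n + 1) - a n) + k * a (n + 1) := by
      linarith [genLaguerre_eval_add_two k (-k) n]
    have hrhs : 0 < (n + 1 + k) * (a (n + 1) - a n) + k * a (n + 1) := by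
      have : 0 < a (n + 1) - a n := sub_pos.mpr hlt
      positivity
    refine ⟨hpos_succ, ?_⟩
    have : 0 < a (n + 2) - a (n + 1) := pos_of_mul_pos_right (hstep ▸ hrhs) (by positivity)
    linarith

lemma strictMono_genLaguerre_eval_neg {k : ℝ} (hk : 0 < k) :
    StrictMono fun n => (genLaguerre k n).eval (-k) :=
  strictMono_nat_of_lt_succ fun n => (genLaguerre_eval_neg_pos_and_lt_succ hk n).2

lemma hatL_eval_one (k x : ℝ) : (hatL k 1).eval x = -(x + k + 1) := by
  simp only [hatL, tsub_self, genLaguerre, mul_one, Nat.not_ofNat_le_one, if_false, add_zero,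
    eval_add, eval_neg, eval_C, eval_X]
  ring

lemma hatL_eval_add_two (k x : ℝ) (n : ℕ) :
    (hatL k (n + 2)).eval x =
      -(x + k + 1) * (genLaguerre k (n + 1)).eval x + (genLaguerre k n).eval x := by
  simp only [hatL, Nat.add_sub_cancel, Nat.add_succ_sub_one, le_add_iff_nonneg_left,
    zero_le, if_true, eval_add, eval_mul, eval_neg, eval_X, eval_C]
  ring

/-- For k > 0 and all n ≥ 1, the X₁-Laguerre polynomial does not
vanish at x = -k. -/
theorem stmt_19 (k : ℝ) (hk : 0 < k) (n : ℕ) (hn : 1 ≤ n) :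
    (hatL k n).eval (-k) ≠ 0 := by
  obtain ⟨m, rfl⟩ : ∃ m, n = m + 1 := ⟨n - 1, by omega⟩
  cases m with
  | zero => simp [hatL_eval_one]
  | succ m =>
    have hlt := strictMono_genLaguerre_eval_neg hk m.lt_succ_self
    rw [hatL_eval_add_two]
    intro h
    linarith
end
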